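/- arXiv:2501.04540 — 7 statements merged into one kernel-verified Lean document; each statement's English description precedes it below -/
import Mathlib

section
/- Let G=(V,E) be an undirected multigraph with terminal pairs (s_i,t_i), and let p,q ≥ 1. An edge set X ⊆ E is a feasible solution to (p,q)-Steiner-Connectivity-Preservation (i.e., for every F ⊆ E\X with |F| ≤ q, every terminal pair is p-edge-connected in (V, E\F)) if and only if for every vertex set S ⊂ V that separates some terminal pair and satisfies |δ(S)| ≤ p+q−1, we have |δ(S) ∩ X| ≥ p. -/
/-- A finite undirected multigraph: each edge `e` has two (not necessarily distinct)
endpoints `fst e` and `snd e`. -/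
structure MGraph (V E : Type*) where
  fst : E → V
  snd : E → V

namespace MGraph

variable {V E : Type*}

/-- `cut G S` is `δ(S)`, the set of edges with exactly one endpoint in `S`. -/
def cut (G : MGraph V E) (S : Set V) : Set E :=
  {e | (G.fst e ∈ S) ↔ (G.snd e ∉ S)}

/-- One step along an edge of `A`. -/
def Step (G : MGraph V E) (A : Set E) (u v : V) : Prop :=
  ∃ e ∈ A, (G.fst e = u ∧ G.snd e = v) ∨ (G.fst e = v ∧ G.snd e = u)

/-- `u` and `v` are connected using only edges from `A`. -/
def Reach (G : MGraph V E) (A : Set E) (u v : V) : Prop :=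
  Relation.ReflTransGen (G.Step A) u v

/-- The spanning subgraph `(V, A)` is connected. -/
def ConnectedOn (G : MGraph V E) (A : Set E) : Prop :=
  ∀ u v : V, G.Reach A u v

/-- The subgraph induced on the vertex set `W`, using only edges of `A` with both
endpoints in `W`, is connected. -/
def InducedConnected (G : MGraph V E) (A : Set E) (W : Set V) : Prop :=
  ∀ u ∈ W, ∀ v ∈ W, G.Reach {e | e ∈ A ∧ G.fst e ∈ W ∧ G.snd e ∈ W} u v

/-- `s` and `t` are `p`-edge-connected in the spanning subgraph `(V, A)`:
every edge cut separating them has at least `p` edges. -/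
def EdgeConnected (G : MGraph V E) (A : Set E) (p : ℕ) (s t : V) : Prop :=
  ∀ S : Set V, s ∈ S → t ∉ S → p ≤ (G.cut S ∩ A).ncard

/-- `S` separates the terminal pair `st`: exactly one of the two terminals lies in `S`. -/
def Separates (S : Set V) (st : V × V) : Prop := (st.1 ∈ S) ↔ (st.2 ∉ S)

/-- `G` is 2-edge-connected: connected, and still connected after removing any single edge. -/
def TwoEdgeConnected (G : MGraph V E) : Prop :=
  G.ConnectedOn Set.univ ∧ ∀ e : E, G.ConnectedOn {e}ᶜ

/-- `G` is 3-edge-connected: connected, and still connected after removing any two edges. -/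
def ThreeEdgeConnected (G : MGraph V E) : Prop :=
  G.ConnectedOn Set.univ ∧ ∀ e f : E, G.ConnectedOn ({e, f} : Set E)ᶜ

/-- `C` is a 2-edge-cut of a 2-edge-connected graph `G`. -/
def TwoEdgeCut (G : MGraph V E) (C : Set E) : Prop :=
  C.ncard = 2 ∧ ¬ G.ConnectedOn Cᶜ

/-- The subgraph of `G` induced on `W` is 2-edge-connected. -/
def InducedTwoEdgeConnected (G : MGraph V E) (W : Set V) : Prop :=
  G.InducedConnected Set.univ W ∧
    ∀ f : E, G.fst f ∈ W → G.snd f ∈ W → G.InducedConnected {f}ᶜ W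

end MGraph

/-!
Removing `F` from the graph removes exactly `F ∩ δ(S)` from each cut. If a small terminal cut has
fewer than `p` protected edges, deleting `q` of its unprotected edges (or all of them, if there
are fewer) leaves fewer than `p` edges. Conversely, a cut with at least `p + q` edges keeps `p` of
them after deleting `q` edges, and a smaller one keeps its `p` protected edges.
-/

namespace Set

variable {α : Type*} [Finite α]

lemma exists_subset_sdiff_ncard_le_ncard_inter_compl_lt {C X : Set α} {p q : ℕ}
    (hX : (C ∩ X).ncard < p) (hC : C.ncard ≤ p + q - 1) :
    ∃ F ⊆ C \ X, F.ncard ≤ q ∧ (C ∩ Fᶜ).ncard < p := by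
  obtain ⟨F, hFD, hFcard⟩ := exists_subset_card_eq (min_le_right q (C \ X).ncard)
  have hsplit : (C ∩ X).ncard + (C \ X).ncard = C.ncard := ncard_inter_add_ncard_sdiff_eq_ncard C X
  have hrest : (C ∩ Fᶜ).ncard = C.ncard - F.ncard :=
    ncard_sdiff (hFD.trans sdiff_subset)
  refine ⟨F, hFD, hFcard ▸ min_le_left _ _, ?_⟩
  omega

lemma le_ncard_inter_compl_of_subset_compl {C X F : Set α} {p q : ℕ}
    (hFX : F ⊆ Xᶜ) (hF : F.ncard ≤ q) (hsmall : C.ncard ≤ p + q - 1 → p ≤ (C ∩ X).ncard) :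
    p ≤ (C ∩ Fᶜ).ncard := by
  by_cases hC : C.ncard ≤ p + q - 1
  · exact (hsmall hC).trans
      (ncard_le_ncard (inter_subset_inter_right C (subset_compl_comm.mp hFX)))
  · have hrest : C.ncard - F.ncard ≤ (C ∩ Fᶜ).ncard := le_ncard_sdiff F C
    omega

end Set

namespace MGraph

variable {V E : Type*}

lemma cut_compl (G : MGraph V E) (S : Set V) : G.cut Sᶜ = G.cut S := by
  ext e
  simp only [cut, Set.mem_ofPred_eq, Set.mem_compl_iff]
  tauto

lemma edgeConnected_iff_forall_separates (G : MGraph V E) (A : Set E) (p : ℕ) (s t : V) :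
    G.EdgeConnected A p s t ↔ ∀ S : Set V, Separates S (s, t) → p ≤ (G.cut S ∩ A).ncard := by
  refine ⟨fun h S hS => ?_, fun h S hs ht => h S (iff_of_true hs ht)⟩
  by_cases hs : s ∈ S
  · exact h S hs (hS.mp hs)
  · rw [← cut_compl]
    exact h Sᶜ hs (Set.notMem_compl_iff.mpr (not_not.mp (mt hS.mpr hs)))

end MGraph

theorem stmt0_general {V E : Type*} [Fintype E] (G : MGraph V E)
    (T : Set (V × V)) (p q : ℕ) (X : Set E) :
    (∀ F : Set E, F ⊆ Xᶜ → F.ncard ≤ q →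
        ∀ st ∈ T, G.EdgeConnected Fᶜ p st.1 st.2) ↔
      (∀ S : Set V, (∃ st ∈ T, MGraph.Separates S st) →
        (G.cut S).ncard ≤ p + q - 1 → p ≤ (G.cut S ∩ X).ncard) := by
  simp only [MGraph.edgeConnected_iff_forall_separates]
  constructor
  · rintro hfeas S ⟨st, hst, hsep⟩ hcut
    by_contra! hX
    obtain ⟨F, hFCX, hFq, hlt⟩ := Set.exists_subset_sdiff_ncard_le_ncard_inter_compl_lt hX hcut
    exact (hfeas F (fun e he => (hFCX he).2) hFq st hst S hsep).not_gt hlt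
  · intro hcut F hFX hFq st hst S hS
    exact Set.le_ncard_inter_compl_of_subset_compl hFX hFq (hcut S ⟨st, hst, hS⟩)

/-- cut formulation of `(p,q)`-Steiner-Connectivity-Preservation.
`X` is feasible (after removing any `≤ q` unprotected edges, every terminal pair stays
`p`-edge-connected) iff every terminal-separating cut `δ(S)` with `|δ(S)| ≤ p+q-1`
contains at least `p` edges of `X`. -/
theorem stmt0 {V E : Type*} [Fintype E] (G : MGraph V E)
    (T : Set (V × V)) (p q : ℕ) (hp : 1 ≤ p) (hq : 1 ≤ q) (X : Set E) :
    (∀ F : Set E, F ⊆ Xᶜ → F.ncard ≤ q →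
        ∀ st ∈ T, G.EdgeConnected Fᶜ p st.1 st.2) ↔
      (∀ S : Set V, (∃ st ∈ T, MGraph.Separates S st) →
        (G.cut S).ncard ≤ p + q - 1 → p ≤ (G.cut S ∩ X).ncard) :=
  stmt0_general G T p q X
end

section
/- Let G=(V,E) be an undirected graph with distinguished vertices s,t, and let q ≥ 0. An edge set X ⊆ E satisfies 'every s-t edge cut of size at most q contains an edge of X' if and only if there exist q+1 s-t paths in G such that every edge contained in at least two of these paths belongs to X. -/
/-- A (simple) `s`-`t` path in a multigraph: a sequence of pairwise distinct vertices
from `s` to `t`, with an edge of `G` between consecutive vertices. -/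
structure MGraph.PathBetween {V E : Type*} (G : MGraph V E) (s t : V) where
  len : ℕ
  vert : Fin (len + 1) → V
  edge : Fin len → E
  first : vert 0 = s
  last : vert (Fin.last len) = t
  inc : ∀ i : Fin len,
      (G.fst (edge i) = vert i.castSucc ∧ G.snd (edge i) = vert i.succ) ∨
      (G.fst (edge i) = vert i.succ ∧ G.snd (edge i) = vert i.castSucc)
  vert_inj : Function.Injective vert

namespace MSE

section AWalkPart

variable {V α : Type*} (tl hd : α → V)

/-- A walk in an "arc system": arcs `α` with tail/head maps into `V`. -/
inductive AWalk : V → V → Type _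
  | nil (v : V) : AWalk v v
  | cons {w : V} (a : α) (p : AWalk (hd a) w) : AWalk (tl a) w

namespace AWalk

variable {tl hd : α → V}

def arcs : ∀ {u v : V}, AWalk tl hd u v → List α
  | _, _, nil _ => []
  | _, _, cons a p => a :: p.arcs

def verts : ∀ {u v : V}, AWalk tl hd u v → List V
  | _, _, nil v => [v]
  | _, _, cons a p => tl a :: p.verts

@[simp] theorem arcs_nil (v : V) : (nil v : AWalk tl hd v v).arcs = [] := rfl
@[simp] theorem arcs_cons {w : V} (a : α) (p : AWalk tl hd (hd a) w) :
    (cons a p).arcs = a :: p.arcs := rfl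
@[simp] theorem verts_nil (v : V) : (nil v : AWalk tl hd v v).verts = [v] := rfl
@[simp] theorem verts_cons {w : V} (a : α) (p : AWalk tl hd (hd a) w) :
    (cons a p).verts = tl a :: p.verts := rfl

theorem length_verts {u v : V} (w : AWalk tl hd u v) :
    w.verts.length = w.arcs.length + 1 := by
  induction w with
  | nil v => simp
  | cons a p ih => simp [ih]

theorem get_zero_verts {u v : V} (w : AWalk tl hd u v) :
    w.verts.get ⟨0, by rw [length_verts]; omega⟩ = u := by
  cases w <;> simp

theorem get_last_verts {u v : V} (w : AWalk tl hd u v) :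
    w.verts.get ⟨w.arcs.length, by rw [length_verts]; omega⟩ = v := by
  induction w with
  | nil v => simp
  | cons a p ih => simpa using ih

theorem start_mem_verts {u v : V} (w : AWalk tl hd u v) : u ∈ w.verts := by
  cases w <;> simp

theorem end_mem_verts {u v : V} (w : AWalk tl hd u v) : v ∈ w.verts := by
  induction w with
  | nil v => simp
  | cons a p ih => simp [ih]

theorem mem_verts_of_mem_arcs {u v : V} (w : AWalk tl hd u v) (a : α) (ha : a ∈ w.arcs) :
    tl a ∈ w.verts ∧ hd a ∈ w.verts := by
  induction w with
  | nil v => simp at ha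
  | cons b p ih =>
    rw [arcs_cons, List.mem_cons] at ha
    rcases ha with rfl | ha
    · exact ⟨by simp, by simp [p.start_mem_verts]⟩
    · rcases ih ha with ⟨h1, h2⟩
      exact ⟨by simp [h1], by simp [h2]⟩

/-- A suffix of a walk starting at any vertex on it. -/
theorem exists_suffix {u v : V} (w : AWalk tl hd u v) (x : V) (hx : x ∈ w.verts) :
    ∃ w' : AWalk tl hd x v, w'.arcs ⊆ w.arcs ∧ w'.verts ⊆ w.verts ∧
      w'.verts.length ≤ w.verts.length := by
  induction w with
  | nil w0 =>
    simp at hx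
    subst hx
    refine ⟨nil x, by simp, by simp, le_rfl⟩
  | cons a p ih =>
    rw [verts_cons, List.mem_cons] at hx
    rcases hx with rfl | hx
    · exact ⟨cons a p, by simp, by simp, le_rfl⟩
    · obtain ⟨w', h1, h2, h3⟩ := ih hx
      refine ⟨w', fun b hb => by simp [h1 hb], fun b hb => by simp [h2 hb], ?_⟩
      simp only [verts_cons, List.length_cons]
      omega

/-- Every walk can be shortcut to one with no repeated vertices. -/
theorem exists_nodup_aux : ∀ (n : ℕ) {u v : V} (w : AWalk tl hd u v),
    w.verts.length ≤ n →
    ∃ w' : AWalk tl hd u v, w'.verts.Nodup ∧ w'.arcs ⊆ w.arcs ∧ w'.verts ⊆ w.verts := by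
  intro n
  induction n with
  | zero =>
    intro u v w h
    rw [length_verts] at h; omega
  | succ n ih =>
    intro u v w h
    cases w with
    | nil =>
      refine ⟨nil u, by simp, by simp, by simp⟩
    | cons a p =>
      have hp : p.verts.length ≤ n := by
        have := h; rw [verts_cons, List.length_cons] at this; omega
      by_cases hu : tl a ∈ p.verts
      · obtain ⟨w', h1, h2, h3⟩ := p.exists_suffix _ hu
        obtain ⟨w'', g1, g2, g3⟩ := ih w' (h3.trans hp)
        exact ⟨w'', g1, fun b hb => by simp [h1 (g2 hb)],
          fun b hb => by simp [h2 (g3 hb)]⟩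
      · obtain ⟨p', g1, g2, g3⟩ := ih p hp
        refine ⟨cons a p', ?_, ?_, ?_⟩
        · simp only [verts_cons, List.nodup_cons]
          exact ⟨fun hmem => hu (g3 hmem), g1⟩
        · intro b hb
          rw [arcs_cons, List.mem_cons] at hb ⊢
          exact hb.imp id (fun hb => g2 hb)
        · intro b hb
          rw [verts_cons, List.mem_cons] at hb ⊢
          exact hb.imp id (fun hb => g3 hb)

theorem exists_nodup {u v : V} (w : AWalk tl hd u v) :
    ∃ w' : AWalk tl hd u v, w'.verts.Nodup ∧ w'.arcs ⊆ w.arcs ∧ w'.verts ⊆ w.verts :=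
  exists_nodup_aux _ w le_rfl

/-- Build a walk from reflexive-transitive closure of a step relation. -/
theorem of_reflTransGen {Q : α → Prop} {u v : V}
    (h : Relation.ReflTransGen (fun x y => ∃ a, Q a ∧ tl a = x ∧ hd a = y) u v) :
    ∃ w : AWalk tl hd u v, ∀ a ∈ w.arcs, Q a := by
  induction h using Relation.ReflTransGen.head_induction_on with
  | refl => exact ⟨nil v, by simp⟩
  | head hstep _ ih =>
    obtain ⟨a, hQ, rfl, rfl⟩ := hstep
    obtain ⟨w, hw⟩ := ih
    exact ⟨cons a w, by
      intro b hb
      rw [arcs_cons, List.mem_cons] at hb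
      rcases hb with rfl | hb
      · exact hQ
      · exact hw b hb⟩

/-- Consecutive vertices are connected by the arcs. -/
theorem arc_spec {u v : V} (w : AWalk tl hd u v) (i : ℕ) (hi : i < w.arcs.length) :
    tl (w.arcs.get ⟨i, hi⟩) = w.verts.get ⟨i, by rw [w.length_verts]; omega⟩ ∧
    hd (w.arcs.get ⟨i, hi⟩) = w.verts.get ⟨i + 1, by rw [w.length_verts]; omega⟩ := by
  induction w generalizing i with
  | nil v => simp at hi
  | cons a p ih =>
    cases i with
    | zero =>
      refine ⟨by simp, ?_⟩
      simpa using (p.get_zero_verts).symm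
    | succ j =>
      have hj : j < p.arcs.length := by simp at hi; omega
      have := ih j hj
      exact ⟨by simpa using this.1, by simpa using this.2⟩

end AWalk

end AWalkPart

end MSE
namespace MSE
section Flow

attribute [local instance] Classical.propDecidable

set_option linter.unusedSectionVars false

variable {V E : Type*} [Fintype E] (G : MGraph V E)

/-- Tail of a directed arc. -/
def tla (a : E × Bool) : V := if a.2 then G.fst a.1 else G.snd a.1
/-- Head of a directed arc. -/
def hda (a : E × Bool) : V := if a.2 then G.snd a.1 else G.fst a.1

theorem tla_rev (a : E × Bool) : tla G (a.1, !a.2) = hda G a := by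
  cases a with | mk e b => cases b <;> simp [tla, hda]

theorem hda_rev (a : E × Bool) : hda G (a.1, !a.2) = tla G a := by
  cases a with | mk e b => cases b <;> simp [tla, hda]

/-- Net outflow at a vertex. -/
noncomputable def excess (f : E × Bool → ℕ) (v : V) : ℤ :=
  ∑ a : E × Bool, ((if tla G a = v then (f a : ℤ) else 0) - (if hda G a = v then (f a : ℤ) else 0))

/-- Capacity constraint. -/
def Cap (c : E → ℕ) (f : E × Bool → ℕ) : Prop := ∀ e, f (e, true) + f (e, false) ≤ c e

/-- The fundamental "flow across a cut" identity. -/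
theorem crossing_eq_excess (f : E × Bool → ℕ) (S : Set V) (s : V) (hs : s ∈ S)
    (hcons : ∀ v ∈ S, v ≠ s → excess G f v = 0) :
    (∑ a : E × Bool, if tla G a ∈ S ∧ hda G a ∉ S then (f a : ℤ) else 0)
      - (∑ a : E × Bool, if hda G a ∈ S ∧ tla G a ∉ S then (f a : ℤ) else 0)
      = excess G f s := by
  classical
  set T : Finset V := (Finset.univ.image (tla G) ∪ Finset.univ.image (hda G)).filter
    (fun v => v ∈ S) with hT
  have htla : ∀ a : E × Bool, tla G a ∈ T ↔ tla G a ∈ S := by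
    intro a
    simp [hT, Finset.mem_filter]
  have hhda : ∀ a : E × Bool, hda G a ∈ T ↔ hda G a ∈ S := by
    intro a
    simp [hT, Finset.mem_filter]
  have step1 : (∑ a : E × Bool, if tla G a ∈ S ∧ hda G a ∉ S then (f a : ℤ) else 0)
      - (∑ a : E × Bool, if hda G a ∈ S ∧ tla G a ∉ S then (f a : ℤ) else 0)
      = ∑ a : E × Bool, (f a : ℤ) *
          ((if tla G a ∈ S then 1 else 0) - (if hda G a ∈ S then 1 else 0)) := by
    rw [← Finset.sum_sub_distrib]
    refine Finset.sum_congr rfl fun a _ => by split_ifs <;> simp_all <;> ring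
  have step2 : ∀ a : E × Bool,
      (f a : ℤ) * ((if tla G a ∈ S then 1 else 0) - (if hda G a ∈ S then 1 else 0))
      = ∑ v ∈ T, ((if tla G a = v then (f a : ℤ) else 0) - (if hda G a = v then (f a : ℤ) else 0)) := by
    intro a
    rw [Finset.sum_sub_distrib]
    rw [Finset.sum_ite_eq T (tla G a) (fun _ => (f a : ℤ)),
        Finset.sum_ite_eq T (hda G a) (fun _ => (f a : ℤ))]
    rw [if_congr (htla a) rfl rfl, if_congr (hhda a) rfl rfl]
    split_ifs <;> ring
  rw [step1]
  calc ∑ a : E × Bool, (f a : ℤ) * ((if tla G a ∈ S then 1 else 0) - (if hda G a ∈ S then 1 else 0))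
      = ∑ a : E × Bool, ∑ v ∈ T, ((if tla G a = v then (f a : ℤ) else 0) - (if hda G a = v then (f a : ℤ) else 0)) :=
        Finset.sum_congr rfl fun a _ => step2 a
    _ = ∑ v ∈ T, excess G f v := by rw [Finset.sum_comm]; rfl
    _ = excess G f s := by
        by_cases hsT : s ∈ T
        · rw [Finset.sum_eq_single_of_mem s hsT]
          intro v hv hvs
          exact hcons v (by simp [hT, Finset.mem_filter] at hv; exact hv.2) hvs
        · have hzero : ∀ v ∈ T, excess G f v = 0 := by
            intro v hv
            refine hcons v (by simp [hT, Finset.mem_filter] at hv; exact hv.2) ?_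
            rintro rfl; exact hsT hv
          rw [Finset.sum_eq_zero hzero]
          have : ∀ a : E × Bool, tla G a ≠ s ∧ hda G a ≠ s := by
            intro a
            constructor <;> intro h <;> apply hsT
            · exact Finset.mem_filter.mpr ⟨Finset.mem_union.mpr (Or.inl
                (Finset.mem_image.mpr ⟨a, Finset.mem_univ a, h⟩)), h ▸ hs⟩
            · exact Finset.mem_filter.mpr ⟨Finset.mem_union.mpr (Or.inr
                (Finset.mem_image.mpr ⟨a, Finset.mem_univ a, h⟩)), h ▸ hs⟩
          unfold excess
          rw [Finset.sum_eq_zero]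
          intro a _
          rw [if_neg ((this a).1 ∘ fun h => h), if_neg (this a).2]
          · ring
    

theorem excess_update (f : E × Bool → ℕ) (a₀ : E × Bool) (n : ℕ) (v : V) :
    excess G (Function.update f a₀ n) v = excess G f v +
      ((n : ℤ) - (f a₀ : ℤ)) *
        ((if tla G a₀ = v then 1 else 0) - (if hda G a₀ = v then 1 else 0)) := by
  classical
  have key : excess G (Function.update f a₀ n) v - excess G f v
      = ∑ a : E × Bool,
        (((if tla G a = v then (Function.update f a₀ n a : ℤ) else 0)
            - (if hda G a = v then (Function.update f a₀ n a : ℤ) else 0))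
          - ((if tla G a = v then (f a : ℤ) else 0) - (if hda G a = v then (f a : ℤ) else 0))) := by
    unfold excess
    simp only [Finset.sum_sub_distrib]
  rw [Finset.sum_eq_single a₀] at key
  · rw [Function.update_self] at key
    have : excess G (Function.update f a₀ n) v - excess G f v =
        ((n : ℤ) - (f a₀ : ℤ)) *
          ((if tla G a₀ = v then 1 else 0) - (if hda G a₀ = v then 1 else 0)) := by
      rw [key]; split_ifs <;> ring
    linarith
  · intro a _ ha
    rw [Function.update_of_ne ha]
    ring
  · intro h
    exact absurd (Finset.mem_univ a₀) h

/-- Residual availability of an arc. -/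
def Res (c : E → ℕ) (f : E × Bool → ℕ) (a : E × Bool) : Prop :=
  0 < f (a.1, !a.2) ∨ f (a.1, true) + f (a.1, false) < c a.1

theorem res_congr {c : E → ℕ} {f f' : E × Bool → ℕ} {a : E × Bool}
    (h : ∀ b, f' (a.1, b) = f (a.1, b)) (hres : Res c f a) : Res c f' a := by
  unfold Res at *
  rw [h, h, h]
  exact hres

/-- Push one unit of flow along a residual arc. -/
theorem augment_step (c : E → ℕ) (f : E × Bool → ℕ) (a : E × Bool)
    (hres : Res c f a) (hcap : Cap c f) :
    ∃ f' : E × Bool → ℕ, Cap c f' ∧ (∀ e, e ≠ a.1 → ∀ b, f' (e, b) = f (e, b)) ∧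
      ∀ v, excess G f' v = excess G f v
        + ((if tla G a = v then 1 else 0) - (if hda G a = v then 1 else 0)) := by
  classical
  obtain ⟨e₀, b₀⟩ := a
  cases b₀ with
  | false =>
    rcases hres with hpos | hlt

    · -- cancel one unit on the reverse arc true
      have hpos' : 0 < f (e₀, true) := hpos
      refine ⟨Function.update f (e₀, true) (f (e₀, true) - 1), ?_, ?_, ?_⟩
      · intro e
        by_cases he : e = e₀
        · subst he
          have h1 : Function.update f (e, true) (f (e, true) - 1) (e, true)
              = f (e, true) - 1 := Function.update_self _ _ _
          have h2 : Function.update f (e, true) (f (e, true) - 1) (e, false)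
              = f (e, false) := Function.update_of_ne (by simp) _ _
          have := hcap e
          omega
        · rw [Function.update_of_ne (by simp [he]), Function.update_of_ne (by simp [he])]
          exact hcap e
      · intro e he b
        exact Function.update_of_ne (by simp [he]) _ _
      · intro v
        have hup := excess_update G f (e₀, true) (f (e₀, true) - 1) v
        have hc : ((f (e₀, true) - 1 : ℕ) : ℤ) - (f (e₀, true) : ℤ) = -1 := by omega
        have t1 : tla G (e₀, true) = hda G (e₀, false) := tla_rev G (e₀, false)
        have t2 : hda G (e₀, true) = tla G (e₀, false) := hda_rev G (e₀, false)
        rw [hup, hc, t1, t2]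
        ring
    · -- add one unit on the forward arc
      have hlt' : f (e₀, true) + f (e₀, false) < c e₀ := hlt
      refine ⟨Function.update f (e₀, false) (f (e₀, false) + 1), ?_, ?_, ?_⟩
      · intro e
        by_cases he : e = e₀
        · subst he
          have h1 : Function.update f (e, false) (f (e, false) + 1) (e, false)
              = f (e, false) + 1 := Function.update_self _ _ _
          have h2 : Function.update f (e, false) (f (e, false) + 1) (e, true)
              = f (e, true) := Function.update_of_ne (by simp) _ _
          omega
        · rw [Function.update_of_ne (by simp [he]), Function.update_of_ne (by simp [he])]
          exact hcap e
      · intro e he b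
        exact Function.update_of_ne (by simp [he]) _ _
      · intro v
        have hup := excess_update G f (e₀, false) (f (e₀, false) + 1) v
        have hc : ((f (e₀, false) + 1 : ℕ) : ℤ) - (f (e₀, false) : ℤ) = 1 := by push_cast; ring
        rw [hup, hc]
        ring
  | true =>
    rcases hres with hpos | hlt

    · -- cancel one unit on the reverse arc false
      have hpos' : 0 < f (e₀, false) := hpos
      refine ⟨Function.update f (e₀, false) (f (e₀, false) - 1), ?_, ?_, ?_⟩
      · intro e
        by_cases he : e = e₀
        · subst he
          have h1 : Function.update f (e, false) (f (e, false) - 1) (e, false)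
              = f (e, false) - 1 := Function.update_self _ _ _
          have h2 : Function.update f (e, false) (f (e, false) - 1) (e, true)
              = f (e, true) := Function.update_of_ne (by simp) _ _
          have := hcap e
          omega
        · rw [Function.update_of_ne (by simp [he]), Function.update_of_ne (by simp [he])]
          exact hcap e
      · intro e he b
        exact Function.update_of_ne (by simp [he]) _ _
      · intro v
        have hup := excess_update G f (e₀, false) (f (e₀, false) - 1) v
        have hc : ((f (e₀, false) - 1 : ℕ) : ℤ) - (f (e₀, false) : ℤ) = -1 := by omega
        have t1 : tla G (e₀, false) = hda G (e₀, true) := tla_rev G (e₀, true)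
        have t2 : hda G (e₀, false) = tla G (e₀, true) := hda_rev G (e₀, true)
        rw [hup, hc, t1, t2]
        ring
    · -- add one unit on the forward arc
      have hlt' : f (e₀, true) + f (e₀, false) < c e₀ := hlt
      refine ⟨Function.update f (e₀, true) (f (e₀, true) + 1), ?_, ?_, ?_⟩
      · intro e
        by_cases he : e = e₀
        · subst he
          have h1 : Function.update f (e, true) (f (e, true) + 1) (e, true)
              = f (e, true) + 1 := Function.update_self _ _ _
          have h2 : Function.update f (e, true) (f (e, true) + 1) (e, false)
              = f (e, false) := Function.update_of_ne (by simp) _ _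
          omega
        · rw [Function.update_of_ne (by simp [he]), Function.update_of_ne (by simp [he])]
          exact hcap e
      · intro e he b
        exact Function.update_of_ne (by simp [he]) _ _
      · intro v
        have hup := excess_update G f (e₀, true) (f (e₀, true) + 1) v
        have hc : ((f (e₀, true) + 1 : ℕ) : ℤ) - (f (e₀, true) : ℤ) = 1 := by push_cast; ring
        rw [hup, hc]
        ring

theorem edges_nodup {u v : V} (w : AWalk (tla G) (hda G) u v) (h : w.verts.Nodup) :
    (w.arcs.map Prod.fst).Nodup := by
  induction w with
  | nil => simp
  | cons a p ih =>
    rw [AWalk.verts_cons, List.nodup_cons] at h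
    rw [AWalk.arcs_cons, List.map_cons, List.nodup_cons]
    refine ⟨?_, ih h.2⟩
    intro hmem
    rw [List.mem_map] at hmem
    obtain ⟨a', ha', hfst⟩ := hmem
    have hv := p.mem_verts_of_mem_arcs a' ha'
    apply h.1
    rcases a with ⟨e, b⟩
    rcases a' with ⟨e', b'⟩
    simp only at hfst
    subst hfst
    cases b <;> cases b' <;> simp only [tla, hda, if_true, if_false] at hv ⊢ <;> tauto

theorem augment_walk (c : E → ℕ) {u v : V} (w : AWalk (tla G) (hda G) u v) :
    ∀ f : E × Bool → ℕ,
      (w.arcs.map Prod.fst).Nodup → (∀ a ∈ w.arcs, Res c f a) → Cap c f →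
      ∃ f', Cap c f' ∧
        ∀ x, excess G f' x = excess G f x
          + ((if u = x then 1 else 0) - (if v = x then 1 else 0)) := by
  induction w with
  | nil w0 => exact fun f _ _ hcap => ⟨f, hcap, fun x => by ring⟩
  | cons a p ih =>
    intro f hnodup hres hcap
    obtain ⟨f₁, hcap₁, hoff, hex₁⟩ := augment_step G c f a (hres a (by simp)) hcap
    rw [AWalk.arcs_cons, List.map_cons, List.nodup_cons] at hnodup
    have hres₁ : ∀ a' ∈ p.arcs, Res c f₁ a' := by
      intro a' ha'
      refine res_congr (fun b => hoff a'.1 ?_ b) (hres a' (by simp [ha']))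
      intro hh
      exact hnodup.1 (List.mem_map.mpr ⟨a', ha', hh⟩)
    obtain ⟨f₂, hcap₂, hex₂⟩ := ih f₁ hnodup.2 hres₁ hcap₁
    refine ⟨f₂, hcap₂, fun x => ?_⟩
    rw [hex₂ x, hex₁ x]
    ring

/-- Conservation away from the terminals. -/
def Conserv (f : E × Bool → ℕ) (s t : V) : Prop :=
  ∀ v, v ≠ s → v ≠ t → excess G f v = 0

theorem sum_exit (c : E → ℕ) (f : E × Bool → ℕ) (S : Set V)
    (hsat : ∀ a : E × Bool, tla G a ∈ S → hda G a ∉ S → (f a : ℤ) = c a.1) :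
    (∑ a : E × Bool, if tla G a ∈ S ∧ hda G a ∉ S then (f a : ℤ) else 0)
      = ∑ e : E, if e ∈ G.cut S then (c e : ℤ) else 0 := by
  classical
  rw [Fintype.sum_prod_type]
  refine Finset.sum_congr rfl fun e _ => ?_
  rw [Fintype.sum_bool]
  have ht := hsat (e, true)
  have hf := hsat (e, false)
  by_cases h1 : G.fst e ∈ S <;> by_cases h2 : G.snd e ∈ S <;>
    simp only [tla, hda, if_true, if_false, MGraph.cut, Set.mem_setOf_eq] at ht hf ⊢
  · simp [h1, h2]
  · simp [h1, h2, ht h1 h2]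
  · simp [h1, h2, hf h2 h1]
  · simp [h1, h2]

theorem sum_enter_zero (f : E × Bool → ℕ) (S : Set V)
    (hzero : ∀ a : E × Bool, hda G a ∈ S → tla G a ∉ S → f a = 0) :
    (∑ a : E × Bool, if hda G a ∈ S ∧ tla G a ∉ S then (f a : ℤ) else 0) = 0 := by
  classical
  refine Finset.sum_eq_zero fun a _ => ?_
  split_ifs with h
  · simp [hzero a h.1 h.2]
  · rfl

theorem maxflow (c : E → ℕ) (s t : V) (hst : s ≠ t) (k : ℕ)
    (Hcut : ∀ S : Set V, s ∈ S → t ∉ S →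
      (k : ℤ) ≤ ∑ e : E, if e ∈ G.cut S then (c e : ℤ) else 0) :
    ∀ j, j ≤ k → ∃ f, Cap c f ∧ Conserv G f s t ∧ excess G f s = (j : ℤ) := by
  intro j
  induction j with
  | zero =>
    exact fun _ => ⟨fun _ => 0, fun e => by simp, fun v _ _ => by simp [excess],
      by simp [excess]⟩
  | succ j ih =>
    intro hjk
    obtain ⟨f, hcap, hcons, hval⟩ := ih (by omega)
    set S : Set V :=
      {v | Relation.ReflTransGen (fun x y => ∃ a, Res c f a ∧ tla G a = x ∧ hda G a = y) s v}
      with hS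
    have hsS : s ∈ S := Relation.ReflTransGen.refl
    have htS : t ∈ S := by
      by_contra htS
      have hsat : ∀ a : E × Bool, tla G a ∈ S → hda G a ∉ S → (f a : ℤ) = c a.1 := by
        intro a haS hhS
        have hnres : ¬ Res c f a := fun hres => hhS (haS.tail ⟨a, hres, rfl, rfl⟩)
        unfold Res at hnres
        push_neg at hnres
        obtain ⟨h0, hsum⟩ := hnres
        have hc := hcap a.1
        rcases a with ⟨e, b⟩
        cases b with
        | true =>
          have h0' : f (e, false) = 0 := Nat.le_zero.mp h0
          replace hsum : c e ≤ f (e, true) + f (e, false) := hsum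
          replace hc : f (e, true) + f (e, false) ≤ c e := hc
          show (f (e, true) : ℤ) = (c e : ℤ)
          omega
        | false =>
          have h0' : f (e, true) = 0 := Nat.le_zero.mp h0
          replace hsum : c e ≤ f (e, true) + f (e, false) := hsum
          replace hc : f (e, true) + f (e, false) ≤ c e := hc
          show (f (e, false) : ℤ) = (c e : ℤ)
          omega
      have hzero : ∀ a : E × Bool, hda G a ∈ S → tla G a ∉ S → f a = 0 := by
        intro a haS htlS
        rcases a with ⟨e, b⟩
        cases b with
        | true =>
          have hnres : ¬ Res c f (e, false) := by
            intro hres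
            exact htlS (haS.tail ⟨(e, false), hres, tla_rev G (e, true), hda_rev G (e, true)⟩)
          unfold Res at hnres
          push_neg at hnres
          exact Nat.le_zero.mp hnres.1
        | false =>
          have hnres : ¬ Res c f (e, true) := by
            intro hres
            exact htlS (haS.tail ⟨(e, true), hres, tla_rev G (e, false), hda_rev G (e, false)⟩)
          unfold Res at hnres
          push_neg at hnres
          exact Nat.le_zero.mp hnres.1
      have hcross := crossing_eq_excess G f S s hsS
        (fun v hv hvs => hcons v hvs (fun h => htS (h ▸ hv)))
      rw [sum_exit G c f S hsat, sum_enter_zero G f S hzero, hval] at hcross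
      have hK := Hcut S hsS htS
      have : ((j : ℤ) + 1) ≤ k := by exact_mod_cast hjk
      linarith
    obtain ⟨w, hw⟩ := AWalk.of_reflTransGen htS
    obtain ⟨w', hnd, harcs, -⟩ := w.exists_nodup
    have hres' : ∀ a ∈ w'.arcs, Res c f a := fun a ha => hw a (harcs ha)
    obtain ⟨f', hcap', hex⟩ := augment_walk G c w' f (edges_nodup G w' hnd) hres' hcap
    refine ⟨f', hcap', fun v hvs hvt => ?_, ?_⟩
    · rw [hex v, hcons v hvs hvt]
      simp [Ne.symm hvs, Ne.symm hvt]
    · rw [hex s, hval]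
      simp [hst, Ne.symm hst]

theorem decrement_walk {u v : V} (w : AWalk (tla G) (hda G) u v) :
    ∀ f : E × Bool → ℕ, (w.arcs.map Prod.fst).Nodup → (∀ a ∈ w.arcs, 0 < f a) →
    ∃ f', (∀ x, excess G f' x = excess G f x
        - ((if u = x then 1 else 0) - (if v = x then 1 else 0))) ∧
      ∀ e : E, f' (e, true) + f' (e, false)
          + (if e ∈ w.arcs.map Prod.fst then 1 else 0) ≤ f (e, true) + f (e, false) := by
  classical
  induction w with
  | nil w0 => exact fun f _ _ => ⟨f, fun x => by ring, fun e => by simp⟩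
  | cons a p ih =>
    intro f hnd hpos
    rw [AWalk.arcs_cons, List.map_cons, List.nodup_cons] at hnd
    have hane : ∀ a' ∈ p.arcs, a' ≠ a := by
      intro a' ha' h
      exact hnd.1 (List.mem_map.mpr ⟨a', ha', congrArg Prod.fst h⟩)
    have hpos₁ : ∀ a' ∈ p.arcs, 0 < Function.update f a (f a - 1) a' := by
      intro a' ha'
      rw [Function.update_of_ne (hane a' ha')]
      exact hpos a' (by simp [ha'])
    obtain ⟨f₂, hex₂, hle₂⟩ := ih (Function.update f a (f a - 1)) hnd.2 hpos₁
    have hposa : 0 < f a := hpos a (by simp)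
    refine ⟨f₂, ?_, ?_⟩
    · intro x
      have hup := excess_update G f a (f a - 1) x
      have hc : ((f a - 1 : ℕ) : ℤ) - (f a : ℤ) = -1 := by omega
      rw [hc] at hup
      rw [hex₂ x, hup]
      ring
    · intro e
      simp only [AWalk.arcs_cons, List.map_cons]
      rcases a with ⟨e₀, b₀⟩
      by_cases he : e = e₀
      · subst he
        have hmem : e ∉ p.arcs.map Prod.fst := hnd.1
        have h1 := hle₂ e
        rw [if_neg hmem] at h1
        have hp : 0 < f (e, b₀) := hposa
        have hsum : Function.update f (e, b₀) (f (e, b₀) - 1) (e, true)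
            + Function.update f (e, b₀) (f (e, b₀) - 1) (e, false) + 1
            = f (e, true) + f (e, false) := by
          cases b₀ with
          | true =>
            rw [Function.update_self, Function.update_of_ne (by simp)]
            have hp' : 0 < f (e, true) := hp
            omega
          | false =>
            rw [Function.update_self, Function.update_of_ne (by simp)]
            have hp' : 0 < f (e, false) := hp
            omega
        rw [if_pos (by simp)]
        omega
      · have heq : ∀ b, Function.update f (e₀, b₀) (f (e₀, b₀) - 1) (e, b) = f (e, b) :=
          fun b => Function.update_of_ne (by simp [he]) _ _
        have h1 := hle₂ e
        rw [heq, heq] at h1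
        have hmemiff : (e ∈ ((e₀, b₀).1 : E) :: p.arcs.map Prod.fst) ↔ e ∈ p.arcs.map Prod.fst := by
          simp [he]
        rw [if_congr hmemiff rfl rfl]
        exact h1

theorem decompose (s t : V) (hst : s ≠ t) :
    ∀ (j : ℕ) (f : E × Bool → ℕ), Conserv G f s t → excess G f s = (j : ℤ) →
    ∃ W : Fin j → AWalk (tla G) (hda G) s t,
      (∀ i, (W i).verts.Nodup) ∧
      ∀ e : E, (∑ i, if e ∈ (W i).arcs.map Prod.fst then 1 else 0)
          ≤ f (e, true) + f (e, false) := by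
  classical
  intro j
  induction j with
  | zero =>
    intro f _ _
    exact ⟨fun i => i.elim0, fun i => i.elim0, fun e => by simp⟩
  | succ j ih =>
    intro f hcons hval
    set S : Set V :=
      {v | Relation.ReflTransGen (fun x y => ∃ a, 0 < f a ∧ tla G a = x ∧ hda G a = y) s v}
      with hS
    have hsS : s ∈ S := Relation.ReflTransGen.refl
    have htS : t ∈ S := by
      by_contra htS
      have hzero : ∀ a : E × Bool, tla G a ∈ S → hda G a ∉ S → f a = 0 := by
        intro a h1 h2
        by_contra h
        exact h2 (h1.tail ⟨a, Nat.pos_of_ne_zero h, rfl, rfl⟩)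
      have hcross := crossing_eq_excess G f S s hsS
        (fun v hv hvs => hcons v hvs (fun h => htS (h ▸ hv)))
      rw [hval] at hcross
      have hexit : (∑ a : E × Bool, if tla G a ∈ S ∧ hda G a ∉ S then (f a : ℤ) else 0) = 0 := by
        refine Finset.sum_eq_zero fun a _ => ?_
        split_ifs with h
        · simp [hzero a h.1 h.2]
        · rfl
      have henter : 0 ≤ (∑ a : E × Bool, if hda G a ∈ S ∧ tla G a ∉ S then (f a : ℤ) else 0) := by
        refine Finset.sum_nonneg fun a _ => ?_
        split_ifs <;> positivity
      rw [hexit] at hcross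
      have hj : (0 : ℤ) ≤ (j : ℤ) := by positivity
      have : ((j : ℤ) + 1) = ((j + 1 : ℕ) : ℤ) := by push_cast; ring
      linarith [this ▸ hcross]
    obtain ⟨w, hw⟩ := AWalk.of_reflTransGen htS
    obtain ⟨w', hnd, harcs, -⟩ := w.exists_nodup
    have hpos' : ∀ a ∈ w'.arcs, 0 < f a := fun a ha => hw a (harcs ha)
    obtain ⟨f', hex', hle'⟩ := decrement_walk G w' f (edges_nodup G w' hnd) hpos'
    have hcons' : Conserv G f' s t := by
      intro x h1 h2
      rw [hex' x, hcons x h1 h2]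
      simp [Ne.symm h1, Ne.symm h2]
    have hval' : excess G f' s = (j : ℤ) := by
      rw [hex' s, hval, if_pos rfl, if_neg (Ne.symm hst)]
      push_cast
      ring
    obtain ⟨W', hWnd, hWcount⟩ := ih f' hcons' hval'
    refine ⟨Fin.cases w' W', ?_, ?_⟩
    · intro i
      induction i using Fin.cases with
      | zero => simpa using hnd
      | succ k => simpa using hWnd k
    · intro e
      rw [Fin.sum_univ_succ]
      simp only [Fin.cases_zero, Fin.cases_succ]
      have h1 := hle' e
      have h2 := hWcount e
      grind

theorem flow_paths (c : E → ℕ) (s t : V) (hst : s ≠ t) (k : ℕ)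
    (Hcut : ∀ S : Set V, s ∈ S → t ∉ S →
      (k : ℤ) ≤ ∑ e : E, if e ∈ G.cut S then (c e : ℤ) else 0) :
    ∃ W : Fin k → AWalk (tla G) (hda G) s t, (∀ i, (W i).verts.Nodup) ∧
      ∀ e : E, (∑ i, if e ∈ (W i).arcs.map Prod.fst then 1 else 0) ≤ c e := by
  obtain ⟨f, hcap, hcons, hval⟩ := maxflow G c s t hst k Hcut k le_rfl
  obtain ⟨W, h1, h2⟩ := decompose G s t hst k f hcons hval
  exact ⟨W, h1, fun e => (h2 e).trans (hcap e)⟩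

/-- Convert a vertex-disjoint walk into a `PathBetween`. -/
noncomputable def ofWalk {s t : V} (w : AWalk (tla G) (hda G) s t) (h : w.verts.Nodup) :
    G.PathBetween s t where
  len := w.arcs.length
  vert i := w.verts.get (Fin.cast w.length_verts.symm i)
  edge i := (w.arcs.get i).1
  first := w.get_zero_verts
  last := w.get_last_verts
  inc := by
    intro i
    have hs := w.arc_spec i.1 i.2
    rcases hget : w.arcs.get ⟨i.1, i.2⟩ with ⟨e, b⟩
    rw [hget] at hs
    cases b with
    | true =>
      simp only [tla, hda, if_true] at hs
      exact Or.inl ⟨hs.1, hs.2⟩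
    | false =>
      simp only [tla, hda, Bool.false_eq_true, if_false] at hs
      exact Or.inr ⟨hs.2, hs.1⟩
  vert_inj := by
    intro i j hij
    have h2 := List.nodup_iff_injective_get.mp h hij
    exact Fin.ext (by simpa using congrArg Fin.val h2)

theorem range_ofWalk_edge {s t : V} (w : AWalk (tla G) (hda G) s t) (h : w.verts.Nodup)
    (e : E) : e ∈ Set.range (ofWalk G w h).edge ↔ e ∈ w.arcs.map Prod.fst := by
  constructor
  · rintro ⟨i, rfl⟩
    exact List.mem_map.mpr ⟨_, w.arcs.get_mem i, rfl⟩
  · intro he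
    obtain ⟨a, ha, rfl⟩ := List.mem_map.mp he
    obtain ⟨i, rfl⟩ := List.mem_iff_get.mp ha
    exact ⟨i, rfl⟩

theorem exists_cross_nat (n : ℕ) (p : ℕ → Prop) (h0 : p 0) (hn : ¬ p n) :
    ∃ i, i < n ∧ p i ∧ ¬ p (i + 1) := by
  induction n with
  | zero => exact absurd h0 hn
  | succ n ih =>
    by_cases hpn : p n
    · exact ⟨n, by omega, hpn, hn⟩
    · obtain ⟨i, h1, h2, h3⟩ := ih hpn
      exact ⟨i, by omega, h2, h3⟩

/-- Every path from inside `S` to outside `S` uses an edge of the cut `δ(S)`. -/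
theorem path_cross {s t : V} (P : G.PathBetween s t) (S : Set V) (hs : s ∈ S) (ht : t ∉ S) :
    ∃ i : Fin P.len, P.edge i ∈ G.cut S ∧ P.edge i ∈ Set.range P.edge := by
  classical
  set p : ℕ → Prop := fun i => ∃ h : i < P.len + 1, P.vert ⟨i, h⟩ ∈ S with hp
  have h0 : p 0 := ⟨by omega, by rw [Fin.mk_zero, P.first]; exact hs⟩
  have hn : ¬ p P.len := by
    rintro ⟨h, hmem⟩
    exact ht (by rw [← P.last]; exact hmem)
  obtain ⟨i, hi, ⟨hlt, hmem⟩, hnot⟩ := exists_cross_nat P.len p h0 hn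
  refine ⟨⟨i, hi⟩, ?_, Set.mem_range_self _⟩
  have hcs : P.vert (⟨i, hi⟩ : Fin P.len).castSucc ∈ S := hmem
  have hsc : P.vert (⟨i, hi⟩ : Fin P.len).succ ∉ S := fun hmem' => hnot ⟨by omega, hmem'⟩
  rcases P.inc ⟨i, hi⟩ with ⟨h1, h2⟩ | ⟨h1, h2⟩
  · exact ⟨fun _ => h2 ▸ hsc, fun _ => h1 ▸ hcs⟩
  · exact ⟨fun hf => absurd hf (h1 ▸ hsc), fun hf => absurd (h2 ▸ hcs) hf⟩
end Flow
end MSE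

/-- `X` hits every `s`-`t` edge cut of size at most `q` iff there exist
`q+1` `s`-`t` paths such that every edge lying on at least two of them belongs to `X`. -/
theorem stmt3 {V E : Type*} [Fintype E] (G : MGraph V E) (s t : V) (hst : s ≠ t)
    (q : ℕ) (X : Set E) :
    (∀ S : Set V, s ∈ S → t ∉ S → (G.cut S).ncard ≤ q → (G.cut S ∩ X).Nonempty) ↔
      (∃ P : Fin (q + 1) → MGraph.PathBetween G s t,
        ∀ e : E, (∃ i j : Fin (q + 1), i ≠ j ∧
          e ∈ Set.range (P i).edge ∧ e ∈ Set.range (P j).edge) → e ∈ X) := by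
  classical
  constructor
  · -- forward: build flow and decompose into paths
    intro H
    set c : E → ℕ := fun e => if e ∈ X then q + 1 else 1 with hc
    have Hcut : ∀ S : Set V, s ∈ S → t ∉ S →
        ((q + 1 : ℕ) : ℤ) ≤ ∑ e : E, if e ∈ G.cut S then (c e : ℤ) else 0 := by
      intro S hs ht
      by_cases hq : (G.cut S).ncard ≤ q
      · obtain ⟨e₀, he₀⟩ := H S hs ht hq
        have h1 : ((q + 1 : ℕ) : ℤ) = (if e₀ ∈ G.cut S then (c e₀ : ℤ) else 0) := by
          rw [if_pos he₀.1, hc]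
          simp [he₀.2]
        rw [h1]
        exact Finset.single_le_sum (f := fun e => if e ∈ G.cut S then (c e : ℤ) else 0)
          (fun e _ => by split_ifs <;> positivity) (Finset.mem_univ e₀)
      · push_neg at hq
        have hfin : (G.cut S).Finite := Set.toFinite _
        have hcard : (G.cut S).ncard = (Finset.univ.filter (fun e => e ∈ G.cut S)).card := by
          rw [Set.ncard_eq_toFinset_card _ hfin]
          congr 1
          ext e
          simp [MGraph.cut]
          exact Iff.symm (@Finset.mem_filter_univ _ _ _ (fun a => Classical.propDecidable (a ∈ G.cut S)) e)
        have h2 : ((G.cut S).ncard : ℤ) = ∑ e : E, if e ∈ G.cut S then (1 : ℤ) else 0 := by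
          rw [hcard, Finset.sum_boole]
        have h3 : ∀ e : E, (if e ∈ G.cut S then (1 : ℤ) else 0)
            ≤ (if e ∈ G.cut S then (c e : ℤ) else 0) := by
          intro e
          split_ifs with h
          · simp only [hc]
            push_cast
            split_ifs <;> norm_num
          · exact le_rfl
        calc ((q + 1 : ℕ) : ℤ) ≤ ((G.cut S).ncard : ℤ) := by exact_mod_cast hq
          _ = ∑ e : E, if e ∈ G.cut S then (1 : ℤ) else 0 := h2
          _ ≤ ∑ e : E, if e ∈ G.cut S then (c e : ℤ) else 0 :=
              Finset.sum_le_sum (fun e _ => h3 e)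
    obtain ⟨W, hWnd, hWc⟩ := MSE.flow_paths G c s t hst (q + 1) Hcut
    refine ⟨fun i => MSE.ofWalk G (W i) (hWnd i), ?_⟩
    rintro e ⟨i, j, hij, hei, hej⟩
    by_contra heX
    have hce : c e = 1 := by rw [hc]; simp [heX]
    have hi' : e ∈ (W i).arcs.map Prod.fst := (MSE.range_ofWalk_edge G (W i) (hWnd i) e).mp hei
    have hj' : e ∈ (W j).arcs.map Prod.fst := (MSE.range_ofWalk_edge G (W j) (hWnd j) e).mp hej
    have h2 : (2 : ℕ) ≤ ∑ k : Fin (q + 1), if e ∈ (W k).arcs.map Prod.fst then 1 else 0 := by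
      calc (2 : ℕ) = ∑ k ∈ ({i, j} : Finset (Fin (q + 1))),
            (if e ∈ (W k).arcs.map Prod.fst then 1 else 0) := by
            rw [Finset.sum_pair hij, if_pos hi', if_pos hj']
        _ ≤ ∑ k : Fin (q + 1), if e ∈ (W k).arcs.map Prod.fst then 1 else 0 :=
            Finset.sum_le_sum_of_subset (Finset.subset_univ _)
    have h4 := hWc e
    rw [hce] at h4
    omega
  · -- backward: pigeonhole on cut edges
    rintro ⟨P, hP⟩ S hs ht hq
    have cross := fun i : Fin (q + 1) => MSE.path_cross G (P i) S hs ht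
    choose idx h1 h2 using cross
    set g : Fin (q + 1) → E := fun i => (P i).edge (idx i) with hg
    have hfin : (G.cut S).Finite := Set.toFinite _
    have hTcard : hfin.toFinset.card ≤ q := by
      rw [← Set.ncard_eq_toFinset_card _ hfin]
      exact hq
    have hmaps : ∀ i ∈ (Finset.univ : Finset (Fin (q + 1))), g i ∈ hfin.toFinset :=
      fun i _ => hfin.mem_toFinset.mpr (h1 i)
    have hlt : hfin.toFinset.card < (Finset.univ : Finset (Fin (q + 1))).card := by
      rw [Finset.card_univ, Fintype.card_fin]
      omega
    obtain ⟨i, -, j, -, hij, hgij⟩ := Finset.exists_ne_map_eq_of_card_lt_of_maps_to hlt hmaps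
    exact ⟨g i, h1 i, hP (g i) ⟨i, j, hij, h2 i, hgij.symm ▸ h2 j⟩⟩
end

section
/- Fix p,q ≥ 1, a family 𝒮 of vertex sets with |δ(S)| ≤ p+q−1 for each S ∈ 𝒮, edge costs c ≥ 0, a partial solution X_{i-1} ⊆ E, and 𝒮_i = {S ∈ 𝒮 : |δ(S) ∩ X_{i-1}| = i−1}. Given a dual-feasible solution y^{(i)} of the augmentation LP (y^{(i)}_S ≥ 0 for S ∈ 𝒮_i, Σ_{S∈𝒮_i: e∈δ(S)} y^{(i)}_S ≤ c_e for all e ∉ X_{i-1}), define y_S = y^{(i)}_S for S ∈ 𝒮_i and 0 otherwise, and z_e = Σ_{S∈𝒮_i: e∈δ(S)} y^{(i)}_S for e ∈ X_{i-1} and 0 otherwise. Then (y,z) is feasible for the dual of the full LP (constraints Σ_{S: e∈δ(S)} y_S − z_e ≤ c_e), and Σ_S p·y_S − Σ_e z_e = (p−i+1) · Σ_{S∈𝒮_i} y^{(i)}_S. -/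
/-!
Each `S ∈ 𝒮ᵢ` meets `X_{i-1}` in exactly `i - 1` edges, so exchanging the order of summation
gives `Σ_e z_e = (i - 1) · Σ_{S ∈ 𝒮ᵢ} y'_S`, while `Σ_S y_S = Σ_{S ∈ 𝒮ᵢ} y'_S`. Feasibility is
immediate: on `e ∈ X_{i-1}` the term `z_e` cancels the whole left-hand side, and on `e ∉ X_{i-1}`
it is the constraint of the augmentation LP.
-/

namespace Finset

variable {ι E M : Type*} [AddCommMonoid M]

theorem sum_filter_ite_mem_of_subset [DecidableEq ι] {s t : Finset ι} (hts : t ⊆ s)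
    (P : ι → Prop) [DecidablePred P] (f : ι → M) :
    ∑ S ∈ s.filter P, (if S ∈ t then f S else 0) = ∑ S ∈ t.filter P, f S := by
  rw [sum_ite_mem, filter_inter, inter_eq_right.mpr hts]

theorem sum_ite_mem_sum_filter_mem_eq_sum_ncard_inter_nsmul [Fintype E] (t : Finset ι)
    (δ : ι → Set E) (X : Set E) [DecidablePred (· ∈ X)] [∀ e, DecidablePred (e ∈ δ ·)]
    (f : ι → M) :
    ∑ e, (if e ∈ X then ∑ S ∈ t.filter (e ∈ δ ·), f S else 0)
      = ∑ S ∈ t, (δ S ∩ X).ncard • f S := by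
  classical
  calc ∑ e, (if e ∈ X then ∑ S ∈ t.filter (e ∈ δ ·), f S else 0)
      = ∑ e, ∑ S ∈ t, if e ∈ δ S ∩ X then f S else 0 := by
        refine sum_congr rfl fun e _ => ?_
        by_cases he : e ∈ X <;> simp [he, sum_filter]
    _ = ∑ S ∈ t, ∑ e, if e ∈ δ S ∩ X then f S else 0 := sum_comm
    _ = ∑ S ∈ t, (δ S ∩ X).ncard • f S := by
        refine sum_congr rfl fun S _ => ?_
        rw [← sum_filter, sum_const, Set.ncard_eq_toFinset_card', Set.toFinset_inter]
        congr 2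
        ext e
        simp

end Finset

open Classical in
theorem stmt6_general {V E : Type*} [Fintype E] (G : MGraph V E)
    (p i : ℕ) (hi1 : 1 ≤ i)
    (c : E → ℝ) (hc : ∀ e, 0 ≤ c e)
    (𝒮 : Finset (Set V))
    (Xprev : Set E)
    (𝒮i : Finset (Set V))
    (h𝒮i : 𝒮i = 𝒮.filter fun S => (G.cut S ∩ Xprev).ncard = i - 1)
    (y' : Set V → ℝ) (hy' : ∀ S ∈ 𝒮i, 0 ≤ y' S)
    (hfeas : ∀ e ∉ Xprev, ∑ S ∈ 𝒮i.filter (fun S => e ∈ G.cut S), y' S ≤ c e)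
    (y : Set V → ℝ) (hy : ∀ S, y S = if S ∈ 𝒮i then y' S else 0)
    (z : E → ℝ)
    (hz : ∀ e, z e = if e ∈ Xprev then
        ∑ S ∈ 𝒮i.filter (fun S => e ∈ G.cut S), y' S else 0) :
    ((∀ S ∈ 𝒮, 0 ≤ y S) ∧ (∀ e : E, 0 ≤ z e) ∧
      (∀ e : E, ∑ S ∈ 𝒮.filter (fun S => e ∈ G.cut S), y S - z e ≤ c e)) ∧
    ∑ S ∈ 𝒮, (p : ℝ) * y S - ∑ e : E, z e
      = ((p : ℝ) - i + 1) * ∑ S ∈ 𝒮i, y' S := by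
  have hsub : 𝒮i ⊆ 𝒮 := h𝒮i ▸ Finset.filter_subset _ _
  have hy_sum : ∑ S ∈ 𝒮, (if S ∈ 𝒮i then y' S else 0) = ∑ S ∈ 𝒮i, y' S := by
    rw [Finset.sum_ite_mem, Finset.inter_eq_right.mpr hsub]
  have hz_sum : ∑ e, (if e ∈ Xprev then ∑ S ∈ 𝒮i.filter (fun S => e ∈ G.cut S), y' S else 0)
      = ((i : ℝ) - 1) * ∑ S ∈ 𝒮i, y' S := by
    rw [Finset.sum_ite_mem_sum_filter_mem_eq_sum_ncard_inter_nsmul, Finset.mul_sum]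
    refine Finset.sum_congr rfl fun S hS => ?_
    rw [h𝒮i, Finset.mem_filter] at hS
    rw [hS.2, nsmul_eq_mul, Nat.cast_sub hi1, Nat.cast_one]
  simp only [hy, hz]
  refine ⟨⟨fun S _ => ?_, fun e => ?_, fun e => ?_⟩, ?_⟩
  · split_ifs with hS
    exacts [hy' S hS, le_rfl]
  · split_ifs
    exacts [Finset.sum_nonneg fun S hS => hy' S (Finset.mem_filter.mp hS).1, le_rfl]
  · rw [Finset.sum_filter_ite_mem_of_subset hsub]
    split_ifs with he
    exacts [(sub_self _).le.trans (hc e), (sub_zero _).le.trans (hfeas e he)]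
  · rw [← Finset.mul_sum, hy_sum, hz_sum]
    ring

open Classical in
/-- dual mapping lemma. Given a dual-feasible solution `y'` of the
`i`-th augmentation LP, the lifted pair `(y, z)` is feasible for the dual of the full
LP, and its objective satisfies `Σ p·y_S − Σ z_e = (p−i+1)·Σ_{S ∈ 𝒮ᵢ} y'_S`. -/
theorem stmt6 {V E : Type*} [Fintype E] (G : MGraph V E)
    (p q i : ℕ) (hp : 1 ≤ p) (hq : 1 ≤ q) (hi1 : 1 ≤ i) (hip : i ≤ p)
    (c : E → ℝ) (hc : ∀ e, 0 ≤ c e)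
    (𝒮 : Finset (Set V)) (h𝒮 : ∀ S ∈ 𝒮, (G.cut S).ncard ≤ p + q - 1)
    (Xprev : Set E)
    (𝒮i : Finset (Set V))
    (h𝒮i : 𝒮i = 𝒮.filter fun S => (G.cut S ∩ Xprev).ncard = i - 1)
    (y' : Set V → ℝ) (hy' : ∀ S ∈ 𝒮i, 0 ≤ y' S)
    (hfeas : ∀ e ∉ Xprev, ∑ S ∈ 𝒮i.filter (fun S => e ∈ G.cut S), y' S ≤ c e)
    (y : Set V → ℝ) (hy : ∀ S, y S = if S ∈ 𝒮i then y' S else 0)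
    (z : E → ℝ)
    (hz : ∀ e, z e = if e ∈ Xprev then
        ∑ S ∈ 𝒮i.filter (fun S => e ∈ G.cut S), y' S else 0) :
    ((∀ S ∈ 𝒮, 0 ≤ y S) ∧ (∀ e : E, 0 ≤ z e) ∧
      (∀ e : E, ∑ S ∈ 𝒮.filter (fun S => e ∈ G.cut S), y S - z e ≤ c e)) ∧
    ∑ S ∈ 𝒮, (p : ℝ) * y S - ∑ e : E, z e
      = ((p : ℝ) - i + 1) * ∑ S ∈ 𝒮i, y' S :=
  stmt6_general G p i hi1 c hc 𝒮 Xprev 𝒮i h𝒮i y' hy' hfeas y hy z hz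
end

section
/- Let G=(V,E) be a connected undirected multigraph, k ≥ 1 an integer. If G has a bond δ(S) with |δ(S)| ≥ k (i.e., S ⊂ V with both G[S] and G[V\S] connected and |δ(S)| ≥ k), then there exists an edge set X ⊆ E with |X| ≤ |V|−2 such that every edge cut of G of size at most k−1 contains an edge of X. -/
private lemma reach_mono {V E : Type*} (G : MGraph V E) {A B : Set E} (hAB : A ⊆ B)
    {u v : V} (h : G.Reach A u v) : G.Reach B u v :=
  Relation.ReflTransGen.mono (r := G.Step A) (p := G.Step B)
    (fun _ _ ⟨e, he, hc⟩ => ⟨e, hAB he, hc⟩) u v h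

private lemma reach_side {V E : Type*} (G : MGraph V E) {T : Set E} (S' : Set V)
    (hT : ∀ e ∈ T, e ∉ G.cut S') {u v : V} (h : G.Reach T u v) : (u ∈ S' ↔ v ∈ S') := by
  induction h with
  | refl => exact Iff.rfl
  | tail _ step ih =>
    obtain ⟨e, he, hc⟩ := step
    have h2 := hT e he
    simp only [MGraph.cut, Set.mem_setOf_eq] at h2
    rcases hc with ⟨h3, h4⟩ | ⟨h3, h4⟩ <;> subst h3 <;> subst h4 <;> tauto

private lemma spanning {V E : Type*} [Fintype V] [Fintype E] (G : MGraph V E)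
    (W : Set V) (r : V) (hr : r ∈ W) (hW : G.InducedConnected Set.univ W) :
    ∃ T : Set E, (∀ e ∈ T, G.fst e ∈ W ∧ G.snd e ∈ W) ∧ T.ncard + 1 ≤ W.ncard ∧
      ∀ u ∈ W, G.Reach T r u := by
  have key : ∀ n (U : Set V), r ∈ U → U ⊆ W →
      (∃ T : Set E, (∀ e ∈ T, G.fst e ∈ W ∧ G.snd e ∈ W) ∧ T.ncard + 1 ≤ U.ncard ∧
        ∀ u ∈ U, G.Reach T r u) →
      W.ncard ≤ U.ncard + n →
      ∃ T : Set E, (∀ e ∈ T, G.fst e ∈ W ∧ G.snd e ∈ W) ∧ T.ncard + 1 ≤ W.ncard ∧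
        ∀ u ∈ W, G.Reach T r u := by
    intro n
    induction n with
    | zero =>
      rintro U hrU hUW ⟨T, hT1, hT2, hT3⟩ hn
      have hUeq : U = W := Set.eq_of_subset_of_ncard_le hUW (by omega) (Set.toFinite W)
      subst hUeq
      exact ⟨T, hT1, hT2, hT3⟩
    | succ n ih =>
      rintro U hrU hUW ⟨T, hT1, hT2, hT3⟩ hn
      by_cases hWU : W ⊆ U
      · have hUeq : U = W := subset_antisymm hUW hWU
        subst hUeq
        exact ⟨T, hT1, hT2, hT3⟩
      · obtain ⟨w, hwW, hwU⟩ := Set.not_subset.mp hWU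
        by_cases hcross : ∃ e, (G.fst e ∈ W ∧ G.snd e ∈ W) ∧
            ((G.fst e ∈ U ∧ G.snd e ∉ U) ∨ (G.snd e ∈ U ∧ G.fst e ∉ U))
        · obtain ⟨e, heW, hc⟩ := hcross
          -- x = outside endpoint, y = inside endpoint
          obtain ⟨x, y, hyU, hxU, hxW, hstep⟩ :
              ∃ x y, y ∈ U ∧ x ∉ U ∧ x ∈ W ∧ G.Step (insert e T) y x := by
            rcases hc with ⟨h3, h4⟩ | ⟨h3, h4⟩
            · exact ⟨G.snd e, G.fst e, h3, h4, heW.2,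
                ⟨e, Set.mem_insert e T, Or.inl ⟨rfl, rfl⟩⟩⟩
            · exact ⟨G.fst e, G.snd e, h3, h4, heW.1,
                ⟨e, Set.mem_insert e T, Or.inr ⟨rfl, rfl⟩⟩⟩
          refine ih (insert x U) (Set.mem_insert_of_mem x hrU)
            (Set.insert_subset hxW hUW) ⟨insert e T, ?_, ?_, ?_⟩ ?_
          · intro f hf
            rcases Set.mem_insert_iff.mp hf with rfl | hfT
            · exact heW
            · exact hT1 f hfT
          · have h5 : (insert e T).ncard ≤ T.ncard + 1 := Set.ncard_insert_le e T
            have h6 : (insert x U).ncard = U.ncard + 1 :=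
              Set.ncard_insert_of_notMem hxU (Set.toFinite U)
            omega
          · intro u hu
            rcases Set.mem_insert_iff.mp hu with rfl | huU
            · exact Relation.ReflTransGen.tail
                (reach_mono G (Set.subset_insert e T) (hT3 y hyU)) hstep
            · exact reach_mono G (Set.subset_insert e T) (hT3 u huU)
          · have h6 : (insert x U).ncard = U.ncard + 1 :=
              Set.ncard_insert_of_notMem hxU (Set.toFinite U)
            omega
        · exfalso
          push_neg at hcross
          have hclosed : ∀ a b : V,
              Relation.ReflTransGen
                (G.Step {e | e ∈ Set.univ ∧ G.fst e ∈ W ∧ G.snd e ∈ W}) a b →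
              a ∈ U → b ∈ U := by
            intro a b h
            induction h with
            | refl => exact id
            | tail _ step ih2 =>
              intro ha
              have hb := ih2 ha
              obtain ⟨e, he, hco⟩ := step
              have heW : G.fst e ∈ W ∧ G.snd e ∈ W := ⟨he.2.1, he.2.2⟩
              have := hcross e heW
              rcases hco with ⟨h5, h6⟩ | ⟨h5, h6⟩ <;> subst h5 <;> subst h6 <;> tauto
          exact hwU (hclosed r w (hW r hr w hwW) hrU)
  refine key W.ncard {r} rfl (Set.singleton_subset_iff.mpr hr) ⟨∅, ?_, ?_, ?_⟩ ?_
  · intro e he; exact absurd he (Set.notMem_empty e)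
  · simp
  · rintro u rfl; exact Relation.ReflTransGen.refl
  · simp

/-- if a connected multigraph `G` has a bond `δ(S)` of size at least `k`,
then there is an edge set `X` with at most `|V|−2` edges (spanning trees of both sides)
hitting every edge cut of size at most `k−1`. -/
theorem stmt9 {V E : Type*} [Fintype V] [Fintype E] (G : MGraph V E)
    (hconn : G.ConnectedOn Set.univ) (k : ℕ) (hk : 1 ≤ k)
    (S : Set V) (hS : S.Nonempty) (hSc : Sᶜ.Nonempty)
    (h1 : G.InducedConnected Set.univ S) (h2 : G.InducedConnected Set.univ Sᶜ)
    (hbig : k ≤ (G.cut S).ncard) :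
    ∃ X : Set E, X.ncard ≤ Fintype.card V - 2 ∧
      ∀ S' : Set V, S'.Nonempty → S'ᶜ.Nonempty → (G.cut S').ncard ≤ k - 1 →
        (G.cut S' ∩ X).Nonempty := by
  obtain ⟨s₀, hs₀⟩ := hS
  obtain ⟨t₀, ht₀⟩ := hSc
  obtain ⟨T1, hT1W, hT1c, hT1r⟩ := spanning G S s₀ hs₀ h1
  obtain ⟨T2, hT2W, hT2c, hT2r⟩ := spanning G Sᶜ t₀ ht₀ h2
  refine ⟨T1 ∪ T2, ?_, ?_⟩
  · have hcard : S.ncard + Sᶜ.ncard = Fintype.card V := by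
      rw [Set.ncard_add_ncard_compl]; exact Nat.card_eq_fintype_card
    have := Set.ncard_union_le T1 T2
    omega
  · intro S' hS'1 hS'2 hcut
    by_contra hne
    rw [Set.not_nonempty_iff_eq_empty, Set.eq_empty_iff_forall_notMem] at hne
    have hT1' : ∀ e ∈ T1, e ∉ G.cut S' := fun e he hc =>
      hne e ⟨hc, Set.mem_union_left T2 he⟩
    have hT2' : ∀ e ∈ T2, e ∉ G.cut S' := fun e he hc =>
      hne e ⟨hc, Set.mem_union_right T1 he⟩
    have hside1 : ∀ v ∈ S, (s₀ ∈ S' ↔ v ∈ S') := fun v hv =>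
      reach_side G S' hT1' (hT1r v hv)
    have hside2 : ∀ v ∈ Sᶜ, (t₀ ∈ S' ↔ v ∈ S') := fun v hv =>
      reach_side G S' hT2' (hT2r v hv)
    by_cases hs : s₀ ∈ S' <;> by_cases ht : t₀ ∈ S'
    · -- S' = univ, contradicting S'ᶜ.Nonempty
      obtain ⟨x, hx⟩ := hS'2
      by_cases hxS : x ∈ S
      · exact hx ((hside1 x hxS).mp hs)
      · exact hx ((hside2 x hxS).mp ht)
    · -- S' = S
      have hSeq : S' = S := by
        ext v
        constructor
        · intro hv
          by_contra hvS
          exact ht ((hside2 v hvS).mpr hv)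
        · intro hv
          exact (hside1 v hv).mp hs
      rw [hSeq] at hcut
      omega
    · -- S' = Sᶜ, and cut Sᶜ = cut S
      have hSeq : S' = Sᶜ := by
        ext v
        constructor
        · intro hv
          intro hvS
          exact hs ((hside1 v hvS).mpr hv)
        · intro hv
          exact (hside2 v hv).mp ht
      have hcc : G.cut Sᶜ = G.cut S := by
        ext e
        simp only [MGraph.cut, Set.mem_setOf_eq, Set.mem_compl_iff]
        tauto
      rw [hSeq, hcc] at hcut
      omega
    · -- S' = ∅, contradicting S'.Nonempty
      obtain ⟨x, hx⟩ := hS'1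
      by_cases hxS : x ∈ S
      · exact hs ((hside1 x hxS).mpr hx)
      · exact ht ((hside2 x hxS).mpr hx)
end

section
/- Let G be 2-edge-connected with 2-edge-cut {e1,e2} as above, and let C = {f1,f2,(u1,v1)} be an edge cut of G1 + (u1,v1) containing the added edge (u1,v1) (possibly f2 absent). Then {f1,f2,e1} is an edge cut of G. -/
namespace MGraph

variable {V E : Type*} (G : MGraph V E)

theorem notMem_cut_of_notMem {S : Set V} {e : E} (h₁ : G.fst e ∉ S) (h₂ : G.snd e ∉ S) :
    e ∉ G.cut S := by
  simp [cut, h₁, h₂]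

theorem mem_cut_of_mem_of_notMem {S : Set V} {e : E} (h₁ : G.fst e ∈ S) (h₂ : G.snd e ∉ S) :
    e ∈ G.cut S := by
  simp [cut, h₁, h₂]

theorem cut_eq_insert_of_subset {S W : Set V} {F : Set E} {e₁ e₂ : E} (hSW : S ⊆ W)
    (hF : ∀ e, G.fst e ∈ W → G.snd e ∈ W → (e ∈ G.cut S ↔ e ∈ F))
    (hFW : ∀ e ∈ F, G.fst e ∈ W ∧ G.snd e ∈ W)
    (he₁ : G.fst e₁ ∈ S) (he₁' : G.snd e₁ ∉ W)
    (he₂ : G.fst e₂ ∉ S) (he₂' : G.snd e₂ ∉ W)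
    (hcross : ∀ e, e ≠ e₁ → e ≠ e₂ → (G.fst e ∈ W ↔ G.snd e ∈ W)) :
    G.cut S = insert e₁ F := by
  ext e
  constructor
  · intro he
    by_cases h₁ : e = e₁
    · exact Or.inl h₁
    by_cases h₂ : e = e₂
    · subst h₂
      exact absurd he (G.notMem_cut_of_notMem he₂ fun h => he₂' (hSW h))
    by_cases hfst : G.fst e ∈ W
    · exact Or.inr ((hF e hfst ((hcross e h₁ h₂).mp hfst)).mp he)
    · have hsnd : G.snd e ∉ W := fun h => hfst ((hcross e h₁ h₂).mpr h)
      exact absurd he (G.notMem_cut_of_notMem (fun h => hfst (hSW h)) fun h => hsnd (hSW h))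
  · rintro (rfl | he)
    · exact G.mem_cut_of_mem_of_notMem he₁ fun h => he₁' (hSW h)
    · exact (hF e (hFW e he).1 (hFW e he).2).mpr he

end MGraph

/-- The cut `{f1, f2, (u1,v1)}` of `G1 + (u1,v1)` is given by its side `S ⊆ V1` containing `u1`;
`f1 = f2` covers the case that `f2` is absent. -/
theorem stmt13_general {V E : Type*} (G : MGraph V E)
    (e1 e2 : E)
    (u1 u2 v1 v2 : V)
    (he1 : G.fst e1 = u1 ∧ G.snd e1 = u2) (he2 : G.fst e2 = v1 ∧ G.snd e2 = v2)
    (V1 V2 : Set V) (hdisj : Disjoint V1 V2)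
    (hu2 : u2 ∈ V2) (hv2 : v2 ∈ V2)
    (hcross : ∀ e : E, e ≠ e1 → e ≠ e2 → ((G.fst e ∈ V1) ↔ (G.snd e ∈ V1)))
    (f1 f2 : E)
    (hf1 : G.fst f1 ∈ V1 ∧ G.snd f1 ∈ V1) (hf2 : G.fst f2 ∈ V1 ∧ G.snd f2 ∈ V1)
    (hcut : ∃ S : Set V, S ⊆ V1 ∧ u1 ∈ S ∧ v1 ∈ V1 \ S ∧
      ∀ e : E, (G.fst e ∈ V1 ∧ G.snd e ∈ V1) →
        (((G.fst e ∈ S) ↔ (G.snd e ∉ S)) ↔ (e = f1 ∨ e = f2))) :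
    ∃ S' : Set V, S'.Nonempty ∧ S'ᶜ.Nonempty ∧
      G.cut S' = {f1, f2, e1} := by
  obtain ⟨S, hSV1, hu1S, ⟨-, hv1S⟩, hboundary⟩ := hcut
  have hcutS : G.cut S = insert e1 {f1, f2} := by
    refine G.cut_eq_insert_of_subset hSV1 (fun e h₁ h₂ => hboundary e ⟨h₁, h₂⟩) ?_
      (he1.1 ▸ hu1S) (he1.2 ▸ Set.disjoint_right.mp hdisj hu2)
      (he2.1 ▸ hv1S) (he2.2 ▸ Set.disjoint_right.mp hdisj hv2) hcross
    rintro e (rfl | rfl)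
    exacts [hf1, hf2]
  refine ⟨S, ⟨u1, hu1S⟩, ⟨v1, hv1S⟩, ?_⟩
  rw [hcutS, Set.insert_comm, Set.pair_comm]

/-- with `{e1,e2}` a 2-edge-cut of the 2-edge-connected multigraph `G`
splitting it into sides `V1 ∋ u1, v1` and `V2 ∋ u2, v2`, if `{f1, f2, (u1,v1)}` is an
edge cut of `G1 + (u1,v1)` containing the added edge (witnessed by `S ⊆ V1` separating
`u1` from `v1` whose boundary inside `V1` is exactly `{f1, f2}`; `f1 = f2` is allowed,
covering the case that `f2` is absent), then `{f1, f2, e1}` is an edge cut of `G`. -/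
theorem stmt13 {V E : Type*} [Fintype V] [Fintype E] (G : MGraph V E)
    (h2ec : G.TwoEdgeConnected)
    (e1 e2 : E) (hne : e1 ≠ e2)
    (u1 u2 v1 v2 : V)
    (he1 : G.fst e1 = u1 ∧ G.snd e1 = u2) (he2 : G.fst e2 = v1 ∧ G.snd e2 = v2)
    (hdisconn : ¬ G.ConnectedOn ({e1, e2} : Set E)ᶜ)
    (V1 V2 : Set V) (hpart : V1 ∪ V2 = Set.univ) (hdisj : Disjoint V1 V2)
    (hu1 : u1 ∈ V1) (hv1 : v1 ∈ V1) (hu2 : u2 ∈ V2) (hv2 : v2 ∈ V2)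
    (hcross : ∀ e : E, e ≠ e1 → e ≠ e2 → ((G.fst e ∈ V1) ↔ (G.snd e ∈ V1)))
    (hG1conn : G.InducedConnected ({e1, e2} : Set E)ᶜ V1)
    (hG2conn : G.InducedConnected ({e1, e2} : Set E)ᶜ V2)
    (f1 f2 : E)
    (hf1 : G.fst f1 ∈ V1 ∧ G.snd f1 ∈ V1) (hf2 : G.fst f2 ∈ V1 ∧ G.snd f2 ∈ V1)
    (hcut : ∃ S : Set V, S ⊆ V1 ∧ u1 ∈ S ∧ v1 ∈ V1 \ S ∧
      ∀ e : E, (G.fst e ∈ V1 ∧ G.snd e ∈ V1) →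
        (((G.fst e ∈ S) ↔ (G.snd e ∉ S)) ↔ (e = f1 ∨ e = f2))) :
    ∃ S' : Set V, S'.Nonempty ∧ S'ᶜ.Nonempty ∧
      G.cut S' = {f1, f2, e1} :=
  stmt13_general G e1 e2 u1 u2 v1 v2 he1 he2 V1 V2 hdisj hu2 hv2 hcross f1 f2 hf1 hf2 hcut
end

section
/- Let G=(V,E) with terminal pairs and partial solution X ⊆ E; assign capacity (p+1)/p to edges of X and 1 to all other edges, and assume every terminal-separating cut of G has at least p edges. Then a terminal-separating cut C satisfies (|C| = p and C ⊄ X) if and only if its capacity is strictly less than p+1; and a cut C satisfies (|C| > p or C ⊆ X) if and only if its capacity is at least p+1. -/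
/- A cut with `a` edges in `X` and `b` outside has capacity `a (p+1)/p + b`,
which is `|C| + a/p`. Since `|C| ≥ p`, this is `≥ p + 1` unless `|C| = p` and `a < p`,
i.e. unless `|C| = p` and some edge of the cut lies outside `X`. -/

theorem Set.finsum_mem_eq_ncard_mul {α R : Type*} [NonAssocSemiring R] {s : Set α}
    (hs : s.Finite) {f : α → R} {c : R} (hf : ∀ x ∈ s, f x = c) :
    ∑ᶠ x ∈ s, f x = s.ncard * c := by
  rw [finsum_mem_congr rfl hf, finsum_mem_eq_finite_toFinset_sum _ hs, Finset.sum_const,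
    Set.ncard_eq_toFinset_card _ hs, nsmul_eq_mul]

theorem Set.finsum_mem_eq_ncard_inter_mul_add_ncard_sdiff {α R : Type*} [NonAssocSemiring R]
    {s : Set α} (hs : s.Finite) (t : Set α) {f : α → R} {c : R}
    (hin : ∀ x ∈ t, f x = c) (hout : ∀ x ∉ t, f x = 1) :
    ∑ᶠ x ∈ s, f x = (s ∩ t).ncard * c + (s \ t).ncard := by
  rw [← finsum_mem_inter_add_sdiff t hs,
    Set.finsum_mem_eq_ncard_mul (hs.inter_of_left t) fun x hx => hin x hx.2,
    Set.finsum_mem_eq_ncard_mul hs.sdiff fun x hx => hout x hx.2, mul_one]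

theorem add_one_le_mul_div_add_iff {a b p : ℕ} (hp : 0 < p) (hab : p ≤ a + b) :
    (p + 1 : ℝ) ≤ a * ((p + 1) / p) + b ↔ p < a + b ∨ b = 0 := by
  have hp' : (0 : ℝ) < p := by exact_mod_cast hp
  have hscaled : (p + 1 : ℝ) ≤ a * ((p + 1) / p) + b ↔ p * (p + 1) ≤ a * (p + 1) + b * p := by
    rw [mul_div_assoc', div_add' _ _ _ hp'.ne', le_div_iff₀ hp', mul_comm]
    norm_cast
  rw [hscaled]
  constructor
  · intro h
    by_contra! hcon
    obtain ⟨hle, hb⟩ := hcon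
    obtain rfl : p = a + b := le_antisymm hab hle
    nlinarith [Nat.pos_of_ne_zero hb]
  · rintro (hlt | rfl) <;> nlinarith

theorem add_one_le_finsum_mem_iff_of_capacity {E : Type*} {C X : Set E} {u : E → ℝ} {p : ℕ}
    (hp : 0 < p) (hpC : p ≤ C.ncard)
    (hu1 : ∀ e ∈ X, u e = ((p : ℝ) + 1) / p) (hu2 : ∀ e ∉ X, u e = 1) :
    (p + 1 : ℝ) ≤ ∑ᶠ e ∈ C, u e ↔ p < C.ncard ∨ C ⊆ X := by
  have hC : C.Finite := Set.finite_of_ncard_pos (hp.trans_le hpC)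
  rw [← Set.ncard_inter_add_ncard_sdiff_eq_ncard C X hC] at hpC ⊢
  rw [Set.finsum_mem_eq_ncard_inter_mul_add_ncard_sdiff hC X hu1 hu2,
    add_one_le_mul_div_add_iff hp hpC, Set.ncard_eq_zero hC.sdiff, Set.sdiff_eq_empty]

theorem stmt17_general {V E : Type*} (G : MGraph V E)
    (T : Set (V × V)) (p : ℕ) (hp : 1 ≤ p)
    (X : Set E) (u : E → ℝ)
    (hu1 : ∀ e ∈ X, u e = ((p : ℝ) + 1) / p) (hu2 : ∀ e ∉ X, u e = 1)
    (hinst : ∀ S : Set V, (∃ st ∈ T, MGraph.Separates S st) → p ≤ (G.cut S).ncard)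
    (S : Set V) (hsep : ∃ st ∈ T, MGraph.Separates S st) :
    (((G.cut S).ncard = p ∧ ¬ G.cut S ⊆ X) ↔
      (∑ᶠ e ∈ G.cut S, u e) < (p : ℝ) + 1) ∧
    ((p < (G.cut S).ncard ∨ G.cut S ⊆ X) ↔
      ((p : ℝ) + 1) ≤ ∑ᶠ e ∈ G.cut S, u e) := by
  have hpC : p ≤ (G.cut S).ncard := hinst S hsep
  have key := add_one_le_finsum_mem_iff_of_capacity hp hpC hu1 hu2
  refine ⟨?_, key.symm⟩
  rw [← not_le, key, hpC.lt_iff_ne, not_or, not_not, eq_comm]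

/-- capacity function of Algorithm 1. With capacity `(p+1)/p` on
edges of `X` and `1` elsewhere, and assuming every terminal-separating cut has at least
`p` edges, a terminal-separating cut `δ(S)` has `|δ(S)| = p` and is not fully protected
iff its capacity is `< p+1`; and it has `|δ(S)| > p` or is fully protected iff its
capacity is `≥ p+1`. -/
theorem stmt17 {V E : Type*} [Fintype E] (G : MGraph V E)
    (T : Set (V × V)) (p : ℕ) (hp : 1 ≤ p)
    (X : Set E) (u : E → ℝ)
    (hu1 : ∀ e ∈ X, u e = ((p : ℝ) + 1) / p) (hu2 : ∀ e ∉ X, u e = 1)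
    (hinst : ∀ S : Set V, (∃ st ∈ T, MGraph.Separates S st) → p ≤ (G.cut S).ncard)
    (S : Set V) (hsep : ∃ st ∈ T, MGraph.Separates S st) :
    (((G.cut S).ncard = p ∧ ¬ G.cut S ⊆ X) ↔
      (∑ᶠ e ∈ G.cut S, u e) < (p : ℝ) + 1) ∧
    ((p < (G.cut S).ncard ∨ G.cut S ⊆ X) ↔
      ((p : ℝ) + 1) ≤ ∑ᶠ e ∈ G.cut S, u e) :=
  stmt17_general G T p hp X u hu1 hu2 hinst S hsep
end

section
/- In the k-Clique reduction graph G' (built from a d-regular graph G with n vertices and m edges: vertex-gadgets V_vertex, edge-gadgets V_edge, vertex t joined to all of V_vertex by protected edges, an auxiliary clique C of size (d+1)n containing s, with d+1 clique vertices fully joined to V_vertex), if G has a clique of size k, then taking S to consist of C together with the gadget vertices of the clique's vertices and edges yields an s-t cut δ(S) with exactly k protected edges and |δ(S)| = (d+1)n − k(k−1). -/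
section CliqueReduction

variable {V : Type*} [Fintype V] [DecidableEq V]

/-- Vertices of the reduction graph `G'`: the vertex gadgets `V_vertex`, the edge
gadgets `V_edge`, the special vertex `t`, and the auxiliary clique `C` of size
`(d+1)·n` (whose vertex `0` is `s`). -/
abbrev RWtype (G : SimpleGraph V) (d n : ℕ) : Type _ :=
  (V ⊕ G.edgeSet) ⊕ (Unit ⊕ Fin ((d + 1) * n))

/-- Edges of the reduction graph `G'`: incidence edges between an edge gadget and each
of its two endpoints (one for each orientation of the underlying edge), the protected
edges from `t` to each vertex gadget, the edges of the auxiliary clique, and the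
complete bipartite connection between `d+1` clique vertices (numbers `1, …, d+1`,
avoiding `s`) and all vertex gadgets. -/
abbrev REtype (G : SimpleGraph V) (d n : ℕ) : Type _ :=
  {pr : V × V // G.Adj pr.1 pr.2} ⊕
    (V ⊕ ({pr : Fin ((d + 1) * n) × Fin ((d + 1) * n) // pr.1 < pr.2} ⊕ (Fin (d + 1) × V)))

/-- The reduction multigraph `G'` built from a `d`-regular graph `G` on `n` vertices. -/
def RGraph (G : SimpleGraph V) (d n : ℕ) (h : d + 2 ≤ (d + 1) * n) :
    MGraph (RWtype G d n) (REtype G d n) where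
  fst := fun e => match e with
    | Sum.inl pr => Sum.inl (Sum.inr ⟨s(pr.val.1, pr.val.2), G.mem_edgeSet.mpr pr.prop⟩)
    | Sum.inr (Sum.inl _) => Sum.inr (Sum.inl ())
    | Sum.inr (Sum.inr (Sum.inl pr)) => Sum.inr (Sum.inr pr.val.1)
    | Sum.inr (Sum.inr (Sum.inr jv)) =>
        Sum.inr (Sum.inr ⟨jv.1.val + 1, by have := jv.1.isLt; omega⟩)
  snd := fun e => match e with
    | Sum.inl pr => Sum.inl (Sum.inl pr.val.1)
    | Sum.inr (Sum.inl v) => Sum.inl (Sum.inl v)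
    | Sum.inr (Sum.inr (Sum.inl pr)) => Sum.inr (Sum.inr pr.val.2)
    | Sum.inr (Sum.inr (Sum.inr jv)) => Sum.inl (Sum.inl jv.2)

/-- The protected edges of `G'`: the edges from `t` to the vertex gadgets. -/
def RProtected (G : SimpleGraph V) (d n : ℕ) : Set (REtype G d n) :=
  Set.range fun v : V => (Sum.inr (Sum.inl v) : REtype G d n)

/-- The vertex `t` of `G'`. -/
def RT (G : SimpleGraph V) (d n : ℕ) : RWtype G d n := Sum.inr (Sum.inl ())

/-- The vertex `s` of `G'` (clique vertex number `0`). -/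
def RS (G : SimpleGraph V) (d n : ℕ) (h : d + 2 ≤ (d + 1) * n) : RWtype G d n :=
  Sum.inr (Sum.inr ⟨0, by omega⟩)

end CliqueReduction

/-- forward direction of the clique reduction. If the `d`-regular
graph `G` on `n` vertices has a clique `K` of size `k`, then the vertex set `S`
consisting of the auxiliary clique together with the gadgets of the vertices and edges
of `K` yields an `s`-`t` cut `δ(S)` with exactly `k` protected edges and exactly
`(d+1)·n − k·(k−1)` edges in total. -/
theorem stmt18 {V : Type*} [Fintype V] [DecidableEq V]
    (G : SimpleGraph V) [DecidableRel G.Adj] (n d k : ℕ)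
    (hn : Fintype.card V = n) (h2 : 2 ≤ n) (hd : 1 ≤ d)
    (hreg : ∀ v : V, G.degree v = d)
    (h : d + 2 ≤ (d + 1) * n)
    (K : Finset V) (hK : G.IsNClique k K)
    (S : Set (RWtype G d n))
    (hS : S = (Sum.inl '' (Sum.inl '' (↑K : Set V))) ∪
        (Sum.inl '' (Sum.inr '' {ed : G.edgeSet | ∀ x ∈ (ed : Sym2 V), x ∈ K})) ∪
        (Sum.inr '' (Sum.inr '' (Set.univ : Set (Fin ((d + 1) * n)))))) :
    k * (k - 1) ≤ (d + 1) * n ∧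
    RS G d n h ∈ S ∧ RT G d n ∉ S ∧
    (((RGraph G d n h).cut S) ∩ RProtected G d n).ncard = k ∧
    ((RGraph G d n h).cut S).ncard = (d + 1) * n - k * (k - 1) := by
  classical
  -- basic numeric facts
  have hkcard : K.card = k := hK.2
  have hkn : k ≤ n := by rw [← hkcard, ← hn]; exact K.card_le_univ
  have hNK : ∀ v ∈ K, G.neighborFinset v ∩ K = K.erase v := by
    intro v hv
    ext u
    simp only [Finset.mem_inter, SimpleGraph.mem_neighborFinset, Finset.mem_erase]
    constructor
    · rintro ⟨hadj, hu⟩; exact ⟨fun huv => G.irrefl (huv ▸ hadj), hu⟩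
    · rintro ⟨hne, hu⟩; exact ⟨(hK.1 hu hv hne).symm, hu⟩
  have hkd : k - 1 ≤ d := by
    rcases Nat.eq_zero_or_pos k with hk0 | hkpos
    · omega
    · obtain ⟨v, hv⟩ := Finset.card_pos.mp (by rw [hkcard]; exact hkpos)
      have hsub : K.erase v ⊆ G.neighborFinset v := by
        intro u hu
        rw [Finset.mem_erase] at hu
        rw [SimpleGraph.mem_neighborFinset]
        exact (hK.1 hu.2 hv hu.1).symm
      have := Finset.card_le_card hsub
      rw [SimpleGraph.card_neighborFinset_eq_degree, hreg,
        Finset.card_erase_of_mem hv, hkcard] at this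
      omega
  -- membership in S
  have hvS : ∀ v : V, (Sum.inl (Sum.inl v) : RWtype G d n) ∈ S ↔ v ∈ K := by
    intro v; rw [hS]; simp
  have heS : ∀ ed : G.edgeSet, (Sum.inl (Sum.inr ed) : RWtype G d n) ∈ S ↔
      ∀ x ∈ (ed : Sym2 V), x ∈ K := by
    intro ed; rw [hS]; simp
  have htS : (Sum.inr (Sum.inl ()) : RWtype G d n) ∉ S := by rw [hS]; simp
  have hcS : ∀ x : Fin ((d+1)*n), (Sum.inr (Sum.inr x) : RWtype G d n) ∈ S := by
    intro x; rw [hS]; simp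
  -- the three pieces of the cut
  set SA : Set {pr : V × V // G.Adj pr.1 pr.2} := {pr | pr.1.1 ∈ K ∧ pr.1.2 ∉ K} with hSA
  set SD : Set (Fin (d+1) × V) := {jv | jv.2 ∉ K} with hSD
  set A : Set (REtype G d n) := Sum.inl '' SA with hA
  set B : Set (REtype G d n) := (fun v : V => Sum.inr (Sum.inl v)) '' ↑K with hB
  set D : Set (REtype G d n) :=
    (fun jv : Fin (d+1) × V => Sum.inr (Sum.inr (Sum.inr jv))) '' SD with hD
  have hinjB : Function.Injective (fun v : V => (Sum.inr (Sum.inl v) : REtype G d n)) := by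
    intro a b hab; simpa using hab
  have hinjD : Function.Injective
      (fun jv : Fin (d+1) × V => (Sum.inr (Sum.inr (Sum.inr jv)) : REtype G d n)) := by
    intro a b hab; simpa using hab
  -- characterization of the cut
  have hcut : (RGraph G d n h).cut S = A ∪ B ∪ D := by
    ext e
    rcases e with ⟨⟨a, b⟩, hab⟩ | (v | (pr | ⟨j, w⟩))
    · have h1 : (Sum.inl ⟨(a, b), hab⟩ : REtype G d n) ∈ (RGraph G d n h).cut S ↔
          ((Sum.inl (Sum.inr ⟨s(a, b), G.mem_edgeSet.mpr hab⟩) : RWtype G d n) ∈ S ↔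
            (Sum.inl (Sum.inl a) : RWtype G d n) ∉ S) := Iff.rfl
      have hsym : (∀ x ∈ (s(a, b) : Sym2 V), x ∈ K) ↔ (a ∈ K ∧ b ∈ K) := by
        constructor
        · intro H; exact ⟨H a (by simp), H b (by simp)⟩
        · rintro ⟨h1, h2⟩ x hx
          rcases Sym2.mem_iff.mp hx with rfl | rfl
          exacts [h1, h2]
      rw [h1, heS, hvS, hsym]
      simp only [hA, hB, hD, hSA, hSD, Set.mem_union, Set.mem_image, Set.mem_setOf_eq,
        Finset.coe_sort_coe, Set.mem_setOf_eq, Finset.mem_coe]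
      constructor
      · intro hiff
        refine Or.inl (Or.inl ⟨⟨(a, b), hab⟩, ?_, rfl⟩)
        simp only [Set.mem_setOf_eq]
        tauto
      · rintro ((⟨x, hx, hxe⟩ | ⟨x, hx, hxe⟩) | ⟨x, hx, hxe⟩)
        · obtain rfl : x = ⟨(a, b), hab⟩ := by simpa using hxe
          simp only [Set.mem_setOf_eq] at hx
          tauto
        · simp at hxe
        · simp at hxe
    · have h1 : (Sum.inr (Sum.inl v) : REtype G d n) ∈ (RGraph G d n h).cut S ↔
          ((Sum.inr (Sum.inl ()) : RWtype G d n) ∈ S ↔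
            (Sum.inl (Sum.inl v) : RWtype G d n) ∉ S) := Iff.rfl
      rw [h1, hvS]
      simp only [hA, hB, hD, hSA, hSD, Set.mem_union, Set.mem_image, Set.mem_setOf_eq,
        Finset.mem_coe]
      constructor
      · intro hiff
        refine Or.inl (Or.inr ⟨v, ?_, rfl⟩)
        tauto
      · rintro ((⟨x, hx, hxe⟩ | ⟨x, hx, hxe⟩) | ⟨x, hx, hxe⟩)
        · simp at hxe
        · obtain rfl : x = v := by simpa using hxe
          tauto
        · simp at hxe
    · have h1 : (Sum.inr (Sum.inr (Sum.inl pr)) : REtype G d n) ∈ (RGraph G d n h).cut S ↔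
          ((Sum.inr (Sum.inr pr.val.1) : RWtype G d n) ∈ S ↔
            (Sum.inr (Sum.inr pr.val.2) : RWtype G d n) ∉ S) := Iff.rfl
      rw [h1]
      simp only [hA, hB, hD, Set.mem_union, Set.mem_image]
      constructor
      · intro hiff
        exact absurd (hcS pr.val.2) (hiff.mp (hcS pr.val.1))
      · rintro ((⟨x, hx, hxe⟩ | ⟨x, hx, hxe⟩) | ⟨x, hx, hxe⟩) <;> simp at hxe
    · have h1 : (Sum.inr (Sum.inr (Sum.inr (j, w))) : REtype G d n) ∈ (RGraph G d n h).cut S ↔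
          ((Sum.inr (Sum.inr ⟨j.val + 1, by have := j.isLt; omega⟩) : RWtype G d n) ∈ S ↔
            (Sum.inl (Sum.inl w) : RWtype G d n) ∉ S) := Iff.rfl
      rw [h1, hvS]
      simp only [hA, hB, hD, hSA, hSD, Set.mem_union, Set.mem_image, Set.mem_setOf_eq,
        Finset.mem_coe]
      constructor
      · intro hiff
        refine Or.inr ⟨(j, w), ?_, rfl⟩
        have := hiff.mp (hcS _)
        simpa using this
      · rintro ((⟨x, hx, hxe⟩ | ⟨x, hx, hxe⟩) | ⟨x, hx, hxe⟩)
        · simp at hxe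
        · simp at hxe
        · obtain rfl : x = (j, w) := by simpa using hxe
          simp only [Set.mem_setOf_eq] at hx
          exact ⟨fun _ => hx, fun _ => hcS _⟩
  -- cardinality of B
  have hBcard : B.ncard = k := by
    rw [hB, Set.ncard_image_of_injective _ hinjB, Set.ncard_coe_finset, hkcard]
  -- cardinality of A
  have hNcard : ∀ v ∈ K, (G.neighborFinset v \ K).card = d - (k - 1) := by
    intro v hv
    rw [← Finset.sdiff_inter_self_left, Finset.card_sdiff_of_subset Finset.inter_subset_left,
      hNK v hv, SimpleGraph.card_neighborFinset_eq_degree, hreg,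
      Finset.card_erase_of_mem hv, hkcard]
  have hAcard : A.ncard = k * (d - (k - 1)) := by
    rw [hA, Set.ncard_image_of_injective _ Sum.inl_injective]
    have hval : Subtype.val '' SA =
        ↑(K.biUnion fun v => (G.neighborFinset v \ K).map
          ⟨Prod.mk v, fun a b hab => by simpa using hab⟩) := by
      ext p
      obtain ⟨a, b⟩ := p
      simp only [Set.mem_image, hSA, Set.mem_setOf_eq, Finset.coe_biUnion, Finset.mem_coe,
        Set.mem_iUnion, Finset.mem_map, Finset.mem_sdiff, SimpleGraph.mem_neighborFinset,
        Function.Embedding.coeFn_mk, Prod.mk.injEq]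
      constructor
      · rintro ⟨⟨⟨x, y⟩, hxy⟩, ⟨hx, hy⟩, heq⟩
        simp only at hx hy
        obtain ⟨rfl, rfl⟩ : x = a ∧ y = b := by simpa using heq
        exact ⟨_, hx, _, ⟨hxy, hy⟩, rfl⟩
      · rintro ⟨v, hv, u, ⟨hadj, hu⟩, heq⟩
        obtain ⟨rfl, rfl⟩ := Prod.mk.inj heq
        exact ⟨⟨(v, u), hadj⟩, ⟨hv, hu⟩, rfl⟩
    rw [← Set.ncard_image_of_injective SA Subtype.val_injective, hval,
      Set.ncard_coe_finset, Finset.card_biUnion]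
    · simp only [Finset.card_map]
      rw [Finset.sum_congr rfl hNcard, Finset.sum_const, hkcard, smul_eq_mul]
    · intro x hx y hy hxy
      simp only [Finset.disjoint_left, Finset.mem_map, Function.Embedding.coeFn_mk]
      rintro _ ⟨u, hu, rfl⟩ ⟨u', hu', heq⟩
      exact hxy (Prod.ext_iff.mp heq).1.symm
  -- cardinality of D
  have hDcard : D.ncard = (d + 1) * (n - k) := by
    rw [hD, Set.ncard_image_of_injective _ hinjD]
    have hval : SD = ↑((Finset.univ : Finset (Fin (d+1))) ×ˢ Kᶜ) := by
      ext ⟨j, w⟩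
      simp [hSD]
    rw [hval, Set.ncard_coe_finset, Finset.card_product, Finset.card_univ,
      Finset.card_compl, Fintype.card_fin, hkcard, hn]
  -- disjointness
  have hdisjAB : Disjoint A B := by
    rw [hA, hB, Set.disjoint_left]
    rintro _ ⟨x, _, rfl⟩ ⟨y, _, hy⟩
    simp at hy
  have hdisjABD : Disjoint (A ∪ B) D := by
    rw [hA, hB, hD, Set.disjoint_left]
    rintro _ (⟨x, _, rfl⟩ | ⟨x, _, rfl⟩) ⟨y, _, hy⟩ <;> simp at hy
  have hcutcard : ((RGraph G d n h).cut S).ncard = k * (d - (k - 1)) + k + (d + 1) * (n - k) := by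
    rw [hcut, Set.ncard_union_eq hdisjABD ((A.toFinite.union B.toFinite)) D.toFinite,
      Set.ncard_union_eq hdisjAB A.toFinite B.toFinite, hAcard, hBcard, hDcard]
  -- protected edges
  have hprot : ((RGraph G d n h).cut S) ∩ RProtected G d n = B := by
    rw [hcut]
    ext e
    simp only [Set.mem_inter_iff, Set.mem_union, RProtected, Set.mem_range]
    constructor
    · rintro ⟨he, v, rfl⟩
      rcases he with ((⟨x, _, hx⟩ | hx) | ⟨x, _, hx⟩)
      · simp at hx
      · exact hx
      · simp at hx
    · intro he
      refine ⟨Or.inl (Or.inr he), ?_⟩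
      rw [hB] at he
      obtain ⟨v, _, rfl⟩ := he
      exact ⟨v, rfl⟩
  -- key arithmetic facts
  have hBle : k * (k - 1) ≤ k * d := Nat.mul_le_mul_left k hkd
  have hDle : (d + 1) * k ≤ (d + 1) * n := Nat.mul_le_mul_left (d + 1) hkn
  have hmul : k * (d - (k - 1)) = k * d - k * (k - 1) := Nat.mul_sub k d (k - 1)
  refine ⟨?_, ?_, ?_, ?_, ?_⟩
  · calc k * (k - 1) ≤ k * d := hBle
      _ ≤ (d + 1) * k := by
          rw [add_mul, one_mul, mul_comm k d]; exact Nat.le_add_right _ _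
      _ ≤ (d + 1) * n := hDle
  · exact hcS _
  · exact htS
  · rw [hprot, hBcard]
  · have key : ∀ A1 B1 C1 D1 k1 : ℕ, B1 ≤ A1 → D1 ≤ C1 → D1 = A1 + k1 →
        (A1 - B1) + k1 + (C1 - D1) = C1 - B1 := by intros; omega
    rw [hcutcard, hmul, Nat.mul_sub (d + 1) n k]
    exact key (k * d) (k * (k - 1)) ((d + 1) * n) ((d + 1) * k) k hBle hDle (by ring)
end
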